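/- arXiv:2402.03772 — 6 statements merged into one kernel-verified Lean document; each statement's English description precedes it below -/
import Mathlib

section
/- For every real y₀ > 0 and every real s̄ ≥ 0, there exists exactly one pair of positive reals (ω, γ) satisfying ω = (1/L)·Tr[R2·T1·(y₀·I_L + s̄·T1 + y₀·γ·R2·T1)⁻¹] and γ = (1/M)·Tr[T2·(y₀·I_M + (L/M)·y₀·ω·T2)⁻¹]. -/
open Matrix Set
open scoped ComplexOrder

noncomputable section

/-- Spectral computation: resolvent-type trace of a PSD matrix. -/
lemma psd_trace_resolvent {n : ℕ} (H : Matrix (Fin n) (Fin n) ℂ) (hH : H.PosSemidef) :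
    ∃ μ : Fin n → ℝ, (∀ i, 0 ≤ μ i) ∧ H.trace = (∑ i, μ i : ℝ) ∧
      ∀ a c : ℝ, 0 < a → 0 ≤ c →
        (((a • (1 : Matrix (Fin n) (Fin n) ℂ) + c • H))⁻¹ * H).trace
          = ((∑ i, μ i / (a + c * μ i) : ℝ) : ℂ) := by
  classical
  set μ := hH.1.eigenvalues with hμ
  have hμ0 : ∀ i, 0 ≤ μ i := hH.eigenvalues_nonneg
  set U : Matrix (Fin n) (Fin n) ℂ := (hH.1.eigenvectorUnitary : Matrix (Fin n) (Fin n) ℂ)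
    with hU
  have hUU : U * star U = 1 := Matrix.mem_unitaryGroup_iff.mp hH.1.eigenvectorUnitary.2
  have hUU' : star U * U = 1 := Matrix.mem_unitaryGroup_iff'.mp hH.1.eigenvectorUnitary.2
  have hcan : ∀ X : Matrix (Fin n) (Fin n) ℂ, star U * (U * X) = X := fun X => by
    rw [← Matrix.mul_assoc, hUU', Matrix.one_mul]
  have hcan2 : ∀ X : Matrix (Fin n) (Fin n) ℂ, U * (star U * X) = X := fun X => by
    rw [← Matrix.mul_assoc, hUU, Matrix.one_mul]
  have hspec : H = U * diagonal (fun i => (μ i : ℂ)) * star U := by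
    simpa [Function.comp_def] using hH.1.spectral_theorem
  have traceUMU : ∀ Mt : Matrix (Fin n) (Fin n) ℂ, (U * Mt * star U).trace = Mt.trace := by
    intro Mt
    rw [Matrix.trace_mul_cycle]; rw [hUU', Matrix.one_mul]
  refine ⟨μ, hμ0, ?_, ?_⟩
  · rw [hspec, traceUMU, Matrix.trace_diagonal]
    push_cast; ring
  intro a c ha hc
  have hden : ∀ i, (0:ℝ) < a + c * μ i := fun i =>
    add_pos_of_pos_of_nonneg ha (mul_nonneg hc (hμ0 i))
  set d : Fin n → ℂ := fun i => ((a + c * μ i : ℝ) : ℂ) with hd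
  have hdne : ∀ i, d i ≠ 0 := fun i => by
    simpa [hd] using Complex.ofReal_ne_zero.mpr (hden i).ne'
  have hdd : diagonal d * diagonal (fun i => (d i)⁻¹) = 1 := by
    rw [Matrix.diagonal_mul_diagonal]
    have : (fun i => d i * (d i)⁻¹) = fun _ => (1:ℂ) := by
      funext i; exact mul_inv_cancel₀ (hdne i)
    rw [this, Matrix.diagonal_one]
  have key : a • (1 : Matrix (Fin n) (Fin n) ℂ) + c • H = U * diagonal d * star U := by
    have h1 : (1 : Matrix (Fin n) (Fin n) ℂ) = U * 1 * star U := by rw [Matrix.mul_one, hUU]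
    calc a • (1 : Matrix (Fin n) (Fin n) ℂ) + c • H
        = U * (a • 1 + c • diagonal (fun i => (μ i : ℂ))) * star U := by
          conv_lhs => rw [hspec, h1]
          rw [Matrix.mul_add, Matrix.add_mul, ← Matrix.smul_mul, ← Matrix.mul_smul,
            ← Matrix.smul_mul, ← Matrix.mul_smul]
      _ = _ := by
          congr 2
          ext i j
          by_cases h : i = j <;>
            simp [h, Matrix.diagonal, Matrix.one_apply, hd, Complex.real_smul] <;>
              push_cast <;> ring
  have hinv : (a • (1 : Matrix (Fin n) (Fin n) ℂ) + c • H)⁻¹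
      = U * diagonal (fun i => (d i)⁻¹) * star U := by
    apply Matrix.inv_eq_right_inv
    rw [key]
    simp only [Matrix.mul_assoc, hcan]
    rw [← Matrix.mul_assoc (diagonal d), hdd, Matrix.one_mul, hUU]
  rw [hinv]
  conv_lhs => rw [hspec]
  have : U * diagonal (fun i => (d i)⁻¹) * star U * (U * diagonal (fun i => (μ i:ℂ)) * star U)
      = U * diagonal (fun i => (d i)⁻¹ * (μ i : ℂ)) * star U := by
    simp only [Matrix.mul_assoc, hcan]
    rw [← Matrix.mul_assoc (diagonal _), Matrix.diagonal_mul_diagonal]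
  rw [this, traceUMU, Matrix.trace_diagonal]
  push_cast
  refine Finset.sum_congr rfl fun i _ => ?_
  rw [hd, div_eq_inv_mul]
  push_cast
  ring


namespace ScalarAux

variable {n m : ℕ}

def fsum (p q : Fin n → ℝ) (γ : ℝ) : ℝ := ∑ i, p i / (1 + γ * q i)

lemma den_pos {q : Fin n → ℝ} (hq : ∀ i, 0 ≤ q i) {γ : ℝ} (hγ : 0 ≤ γ) (i : Fin n) :
    0 < 1 + γ * q i :=
  add_pos_of_pos_of_nonneg one_pos (mul_nonneg hγ (hq i))

lemma exists_pos {p : Fin n → ℝ} (hP : 0 < ∑ i, p i) : ∃ i, 0 < p i := by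
  by_contra h
  push_neg at h
  exact absurd (Finset.sum_nonpos fun i _ => (h i)) (not_le.mpr hP)

lemma fsum_nonneg {p q : Fin n → ℝ} (hp : ∀ i, 0 ≤ p i) (hq : ∀ i, 0 ≤ q i)
    {γ : ℝ} (hγ : 0 ≤ γ) : 0 ≤ fsum p q γ :=
  Finset.sum_nonneg fun i _ => div_nonneg (hp i) (den_pos hq hγ i).le

lemma fsum_pos {p q : Fin n → ℝ} (hp : ∀ i, 0 ≤ p i) (hq : ∀ i, 0 ≤ q i)
    (hP : 0 < ∑ i, p i) {γ : ℝ} (hγ : 0 ≤ γ) : 0 < fsum p q γ := by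
  obtain ⟨i0, hi0⟩ := exists_pos hP
  exact Finset.sum_pos' (fun i _ => div_nonneg (hp i) (den_pos hq hγ i).le)
    ⟨i0, Finset.mem_univ i0, div_pos hi0 (den_pos hq hγ i0)⟩

lemma fsum_antitone {p q : Fin n → ℝ} (hp : ∀ i, 0 ≤ p i) (hq : ∀ i, 0 ≤ q i)
    {γ₁ γ₂ : ℝ} (h1 : 0 ≤ γ₁) (h12 : γ₁ ≤ γ₂) : fsum p q γ₂ ≤ fsum p q γ₁ := by
  refine Finset.sum_le_sum fun i _ => ?_
  have d1 := den_pos hq h1 i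
  have d2 := den_pos hq (le_trans h1 h12) i
  rw [div_le_div_iff₀ d2 d1]
  nlinarith [hp i, hq i, mul_le_mul_of_nonneg_right h12 (hq i)]

lemma fsum_le_sum {p q : Fin n → ℝ} (hp : ∀ i, 0 ≤ p i) (hq : ∀ i, 0 ≤ q i)
    {γ : ℝ} (hγ : 0 ≤ γ) : fsum p q γ ≤ ∑ i, p i := by
  refine Finset.sum_le_sum fun i _ => ?_
  rw [div_le_iff₀ (den_pos hq hγ i)]
  nlinarith [hp i, hq i, mul_nonneg (mul_nonneg hγ (hq i)) (hp i)]

lemma fsum_continuousOn (p q : Fin n → ℝ) (hq : ∀ i, 0 ≤ q i) :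
    ContinuousOn (fsum p q) (Set.Ici 0) := by
  apply continuousOn_finset_sum
  intro i _
  apply ContinuousOn.div continuousOn_const
  · fun_prop
  · intro γ hγ
    exact (den_pos hq hγ i).ne'

/-- scalability: `fsum p q (γ/α) < α * fsum p q γ` for `α > 1`. -/
lemma fsum_scal {p q : Fin n → ℝ} (hp : ∀ i, 0 ≤ p i) (hq : ∀ i, 0 ≤ q i)
    (hP : 0 < ∑ i, p i) {γ α : ℝ} (hγ : 0 ≤ γ) (hα : 1 < α) :
    fsum p q (γ / α) < α * fsum p q γ := by
  obtain ⟨i0, hi0⟩ := exists_pos hP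
  have hα0 : 0 < α := lt_trans one_pos hα
  have hγα : 0 ≤ γ / α := div_nonneg hγ hα0.le
  have hgax : γ / α * α = γ := div_mul_cancel₀ γ hα0.ne'
  unfold fsum
  rw [Finset.mul_sum]
  refine Finset.sum_lt_sum (fun i _ => ?_) ⟨i0, Finset.mem_univ i0, ?_⟩
  · have d1 := den_pos hq hγα i
    have d2 := den_pos hq hγ i
    rw [mul_div_assoc' α, div_le_div_iff₀ d1 d2]
    have e1 : γ / α * q i * α = γ * q i := by rw [mul_right_comm, hgax]
    nlinarith [hp i, hq i, mul_nonneg hγ (hq i)]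
  · have d1 := den_pos hq hγα i0
    have d2 := den_pos hq hγ i0
    rw [mul_div_assoc' α, div_lt_div_iff₀ d1 d2]
    have e1 : γ / α * q i0 * α = γ * q i0 := by rw [mul_right_comm, hgax]
    nlinarith [hq i0, mul_nonneg hγ (hq i0)]

theorem scalar_exu (p q : Fin n → ℝ) (r s : Fin m → ℝ)
    (hp : ∀ i, 0 ≤ p i) (hq : ∀ i, 0 ≤ q i) (hr : ∀ j, 0 ≤ r j) (hs : ∀ j, 0 ≤ s j)
    (hP : 0 < ∑ i, p i) (hR : 0 < ∑ j, r j) :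
    ∃! ω : ℝ, 0 < ω ∧ ω = fsum p q (fsum r s ω) := by
  have hg0 : ∀ {ω : ℝ}, 0 ≤ ω → 0 ≤ fsum r s ω := fun h => fsum_nonneg hr hs h
  have hh_pos : ∀ {ω : ℝ}, 0 ≤ ω → 0 < fsum p q (fsum r s ω) := fun h =>
    fsum_pos hp hq hP (hg0 h)
  -- existence via IVT
  set P : ℝ := ∑ i, p i with hPdef
  have hcont : ContinuousOn (fun ω => fsum p q (fsum r s ω) - ω) (Icc 0 (P + 1)) := by
    apply ContinuousOn.sub _ continuousOn_id
    apply ContinuousOn.comp (fsum_continuousOn p q hq)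
      ((fsum_continuousOn r s hs).mono (Icc_subset_Ici_self))
    intro ω hω
    exact hg0 hω.1
  have h0 : (0:ℝ) < fsum p q (fsum r s 0) - 0 := by
    simpa using hh_pos le_rfl
  have hP1 : fsum p q (fsum r s (P + 1)) - (P + 1) < 0 := by
    have h1 : fsum p q (fsum r s (P + 1)) ≤ P := fsum_le_sum hp hq (hg0 (by positivity))
    linarith
  have hsub : Set.Icc (fsum p q (fsum r s (P+1)) - (P+1)) (fsum p q (fsum r s 0) - 0)
      ⊆ (fun ω => fsum p q (fsum r s ω) - ω) '' Icc 0 (P+1) :=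
    intermediate_value_Icc' (by positivity) hcont
  obtain ⟨ω, hωmem, hωeq⟩ := hsub ⟨hP1.le, h0.le⟩
  have hωfix : ω = fsum p q (fsum r s ω) := by
    have h := hωeq
    dsimp only at h
    linarith
  have hωpos : 0 < ω := hωfix ▸ hh_pos hωmem.1
  refine ⟨ω, ⟨hωpos, hωfix⟩, ?_⟩
  -- uniqueness
  rintro ω' ⟨hω'pos, hω'fix⟩
  by_contra hne
  -- wlog: show contradiction whenever ω₁ < ω₂ are two fixed points
  have key : ∀ ω₁ ω₂ : ℝ, 0 < ω₁ → ω₁ < ω₂ →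
      ω₁ = fsum p q (fsum r s ω₁) → ω₂ = fsum p q (fsum r s ω₂) → False := by
    intro ω₁ ω₂ h1 h12 hf1 hf2
    set α := ω₂ / ω₁ with hα
    have hα1 : 1 < α := (one_lt_div h1).mpr h12
    have hα0 : 0 < α := lt_trans one_pos hα1
    have hω2 : ω₂ = α * ω₁ := by rw [hα, div_mul_cancel₀ _ h1.ne']
    -- step (i): fsum r s ω₂ ≥ (fsum r s ω₁)/α
    have hi : fsum r s ω₁ / α ≤ fsum r s ω₂ := by
      unfold fsum
      rw [Finset.sum_div]
      refine Finset.sum_le_sum fun j _ => ?_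
      have d1 := den_pos hs h1.le j
      have d2 := den_pos hs (le_trans h1.le h12.le) j
      rw [div_div, div_le_div_iff₀ (by positivity) d2]
      have : ω₂ * s j = α * (ω₁ * s j) := by rw [hω2]; ring
      nlinarith [hr j, hs j, mul_nonneg h1.le (hs j), mul_nonneg (mul_nonneg h1.le (hs j)) (hr j)]
    -- step (ii)+(iii)
    have hii : fsum p q (fsum r s ω₂) ≤ fsum p q (fsum r s ω₁ / α) :=
      fsum_antitone hp hq (div_nonneg (hg0 h1.le) hα0.le) hi
    have hiii : fsum p q (fsum r s ω₁ / α) < α * fsum p q (fsum r s ω₁) :=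
      fsum_scal hp hq hP (hg0 h1.le) hα1
    rw [← hf1] at hiii
    rw [← hf2] at hii
    rw [hω2] at hii
    linarith
  rcases lt_trichotomy ω ω' with h | h | h
  · exact key ω ω' hωpos h hωfix hω'fix
  · exact hne (h.symm)
  · exact key ω' ω hω'pos h hω'fix hωfix

end ScalarAux



lemma psd_smul {n : ℕ} {H : Matrix (Fin n) (Fin n) ℂ} (hH : H.PosSemidef) {c : ℝ} (hc : 0 ≤ c) :
    (c • H).PosSemidef := by
  constructor
  · have : (c • H)ᴴ = c • Hᴴ := by ext i j; simp [Complex.real_smul]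
    rw [Matrix.IsHermitian, this, hH.1.eq]
  · exact (hH.smul hc).2

lemma real_smul_one_posDef {n : ℕ} {y : ℝ} (hy : 0 < y) :
    (y • (1 : Matrix (Fin n) (Fin n) ℂ)).PosDef := by
  have h1 : (y • (1 : Matrix (Fin n) (Fin n) ℂ)) = Matrix.diagonal (fun _ => (y:ℂ)) := by
    ext i j
    by_cases h : i = j <;> simp [Matrix.one_apply, Matrix.diagonal, h, Complex.real_smul]
  rw [h1]
  exact posDef_diagonal_iff.mpr (fun _ => by exact_mod_cast hy)

lemma trace_herm_sq_zero {k : ℕ} (A : Matrix (Fin k) (Fin k) ℂ)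
    (h : (Aᴴ * A).trace = 0) : A = 0 := by
  rw [Matrix.trace] at h
  have hterm : ∀ j, (Aᴴ * A).diag j = 0 := by
    intro j
    have hnn : ∀ j' : Fin k, j' ∈ Finset.univ → 0 ≤ (Aᴴ * A).diag j' := by
      intro j' _
      simpa [Matrix.diag, Matrix.mul_apply, Matrix.conjTranspose_apply] using
        Finset.sum_nonneg (fun i (_ : i ∈ Finset.univ) => star_mul_self_nonneg (A i j'))
    exact (Finset.sum_eq_zero_iff_of_nonneg hnn).mp h j (Finset.mem_univ j)
  ext i j
  have := hterm j
  simp only [Matrix.diag, Matrix.mul_apply, Matrix.conjTranspose_apply] at this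
  have h2 := (Finset.sum_eq_zero_iff_of_nonneg
    (fun i' (_ : i' ∈ Finset.univ) => star_mul_self_nonneg (A i' j))).mp this i
    (Finset.mem_univ i)
  rcases mul_eq_zero.mp h2 with h3 | h3
  · simpa using star_eq_zero.mp h3
  · simpa using h3

open scoped MatrixOrder in
/-- Reduction of the first fixed-point trace to a PSD resolvent trace. -/
lemma eq1_reduce {L : ℕ} (T1 R2 : Matrix (Fin L) (Fin L) ℂ)
    (hT1 : T1.PosSemidef) (hR2 : R2.PosSemidef)
    (htr1 : 0 < ((R2 * T1).trace).re)
    (y0 sbar : ℝ) (hy0 : 0 < y0) (hs : 0 ≤ sbar) :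
    ∃ H : Matrix (Fin L) (Fin L) ℂ, H.PosSemidef ∧ H.trace ≠ 0 ∧
      ∀ c : ℝ, 0 ≤ c →
        (R2 * T1 * (y0 • (1 : Matrix (Fin L) (Fin L) ℂ) + sbar • T1 + c • (R2 * T1))⁻¹).trace
          = (((1:ℝ) • (1 : Matrix (Fin L) (Fin L) ℂ) + c • H)⁻¹ * H).trace := by
  classical
  set A : Matrix (Fin L) (Fin L) ℂ := y0 • 1 + sbar • T1 with hAdef
  have hA : A.PosDef := (real_smul_one_posDef hy0).add_posSemidef (psd_smul hT1 hs)
  have hdetA : IsUnit A.det := (Matrix.isUnit_iff_isUnit_det A).mp hA.isUnit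
  have hAAinv : A * A⁻¹ = 1 := Matrix.mul_nonsing_inv A hdetA
  have hAinvA : A⁻¹ * A = 1 := Matrix.nonsing_inv_mul A hdetA
  set S : Matrix (Fin L) (Fin L) ℂ := CFC.sqrt T1 with hSdef
  have hSS : S * S = T1 := CFC.sqrt_mul_sqrt_self T1 hT1.nonneg
  have hSH : Sᴴ = S := (CFC.sqrt_nonneg T1).posSemidef.1
  have hST1 : S * T1 = T1 * S := by rw [← hSS, ← Matrix.mul_assoc, Matrix.mul_assoc]
  have hSA : S * A = A * S := by
    rw [hAdef, Matrix.mul_add, Matrix.add_mul, Matrix.mul_smul, Matrix.smul_mul,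
      Matrix.mul_one, Matrix.one_mul, Matrix.mul_smul, Matrix.smul_mul, hST1]
  have hSAinv : A⁻¹ * S = S * A⁻¹ :=
    calc A⁻¹ * S = A⁻¹ * (S * A * A⁻¹) := by rw [Matrix.mul_assoc, hAAinv, Matrix.mul_one]
      _ = A⁻¹ * (A * S * A⁻¹) := by rw [hSA]
      _ = A⁻¹ * A * S * A⁻¹ := by rw [← Matrix.mul_assoc, ← Matrix.mul_assoc]
      _ = S * A⁻¹ := by rw [hAinvA, Matrix.one_mul]
  set K : Matrix (Fin L) (Fin L) ℂ := T1 * A⁻¹ with hKdef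
  have hKform : K = S * A⁻¹ * Sᴴ := by
    rw [hSH]
    calc K = S * S * A⁻¹ := by rw [hKdef, hSS]
      _ = S * (A⁻¹ * S) := by rw [Matrix.mul_assoc, hSAinv]
      _ = S * A⁻¹ * S := by rw [Matrix.mul_assoc]
  have hKpsd : K.PosSemidef := hKform ▸ (hA.inv.posSemidef.mul_mul_conjTranspose_same S)
  set W : Matrix (Fin L) (Fin L) ℂ := CFC.sqrt K with hWdef
  have hWW : W * W = K := CFC.sqrt_mul_sqrt_self K hKpsd.nonneg
  have hWH : Wᴴ = W := (CFC.sqrt_nonneg K).posSemidef.1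
  set H : Matrix (Fin L) (Fin L) ℂ := W * R2 * W with hHdef
  have hHpsd : H.PosSemidef := by
    have := hR2.mul_mul_conjTranspose_same W
    rwa [hWH] at this
  have hKA : K * A = T1 := by rw [hKdef, Matrix.mul_assoc, hAinvA, Matrix.mul_one]
  refine ⟨H, hHpsd, ?_, ?_⟩
  · -- trace of H nonzero
    intro htr0
    set G : Matrix (Fin L) (Fin L) ℂ := CFC.sqrt R2 with hGdef
    have hGG : G * G = R2 := CFC.sqrt_mul_sqrt_self R2 hR2.nonneg
    have hGH : Gᴴ = G := (CFC.sqrt_nonneg R2).posSemidef.1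
    have hform : H = (G * W)ᴴ * (G * W) := by
      rw [Matrix.conjTranspose_mul, hGH, hWH, hHdef, ← hGG]
      noncomm_ring
    have hGW : G * W = 0 := trace_herm_sq_zero _ (by rw [← hform, htr0])
    have hR2W : R2 * W = 0 := by rw [← hGG, Matrix.mul_assoc, hGW, Matrix.mul_zero]
    have hR2K : R2 * K = 0 := by rw [← hWW, ← Matrix.mul_assoc, hR2W, Matrix.zero_mul]
    have hR2T1 : R2 * T1 = 0 := by
      rw [← hKA, ← Matrix.mul_assoc, hR2K, Matrix.zero_mul]
    rw [hR2T1] at htr1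
    simp at htr1
  · intro c hc
    have h1cH : ((1:ℝ) • (1 : Matrix (Fin L) (Fin L) ℂ) + c • H).PosDef := by
      rw [one_smul]
      exact Matrix.PosDef.one.add_posSemidef (psd_smul hHpsd hc)
    -- X = R2 * K,  U = R2 * W, V = W
    set X : Matrix (Fin L) (Fin L) ℂ := R2 * K with hXdef
    have hXUV : X = (R2 * W) * W := by rw [hXdef, ← hWW, Matrix.mul_assoc]
    have hHVU : H = W * (R2 * W) := by rw [hHdef, Matrix.mul_assoc]
    have hdet1 : IsUnit (1 + c • X).det := by
      have : (1 + c • X).det = ((1:ℝ) • 1 + c • H).det := by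
        rw [hXUV, ← Matrix.smul_mul, Matrix.det_one_add_mul_comm, Matrix.mul_smul, ← hHVU,
          one_smul]
      rw [this]
      exact (Matrix.isUnit_iff_isUnit_det _).mp h1cH.isUnit
    have hfac : y0 • (1 : Matrix (Fin L) (Fin L) ℂ) + sbar • T1 + c • (R2 * T1)
        = (1 + c • X) * A := by
      rw [Matrix.add_mul, Matrix.one_mul, Matrix.smul_mul, hXdef, Matrix.mul_assoc, hKA,
        hAdef]
    rw [hfac, Matrix.mul_inv_rev]
    have hBA : R2 * T1 * A⁻¹ = X := by rw [hXdef, hKdef, Matrix.mul_assoc]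
    rw [← Matrix.mul_assoc, hBA]
    -- push-through
    have hdet2 : IsUnit ((1:ℝ) • (1:Matrix (Fin L) (Fin L) ℂ) + c • H).det :=
      (Matrix.isUnit_iff_isUnit_det _).mp h1cH.isUnit
    have hpush : W * (1 + c • X)⁻¹ = ((1:ℝ) • 1 + c • H)⁻¹ * W := by
      have hcomm : ((1:ℝ) • 1 + c • H) * W = W * (1 + c • X) := by
        rw [one_smul, Matrix.add_mul, Matrix.mul_add, Matrix.one_mul, Matrix.mul_one,
          Matrix.smul_mul, Matrix.mul_smul, hHVU, hXUV]
        rw [Matrix.mul_assoc, Matrix.mul_assoc]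
      calc W * (1 + c • X)⁻¹
          = ((1:ℝ) • 1 + c • H)⁻¹ * (((1:ℝ) • 1 + c • H) * W) * (1 + c • X)⁻¹ := by
            rw [← Matrix.mul_assoc, Matrix.nonsing_inv_mul _ hdet2, Matrix.one_mul]
        _ = ((1:ℝ) • 1 + c • H)⁻¹ * W * ((1 + c • X) * (1 + c • X)⁻¹) := by
            rw [hcomm]; noncomm_ring
        _ = ((1:ℝ) • 1 + c • H)⁻¹ * W := by
            rw [Matrix.mul_nonsing_inv _ hdet1, Matrix.mul_one]
    calc (X * (1 + c • X)⁻¹).trace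
        = ((R2 * W) * (W * (1 + c • X)⁻¹)).trace := by rw [hXUV, Matrix.mul_assoc]
      _ = ((R2 * W) * (((1:ℝ) • 1 + c • H)⁻¹ * W)).trace := by rw [hpush]
      _ = ((((1:ℝ) • 1 + c • H)⁻¹ * W) * (R2 * W)).trace := Matrix.trace_mul_comm _ _
      _ = (((1:ℝ) • 1 + c • H)⁻¹ * H).trace := by rw [Matrix.mul_assoc, ← hHVU]

open ScalarAux

/-- For every `y₀ > 0` and `s̄ ≥ 0` there is exactly one pair of positive reals `(ω, γ)`
satisfying the coupled fixed-point equations. -/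
theorem existsUnique_positive_pair
    (L M : ℕ) (hL : 0 < L) (hM : 0 < M)
    (T1 R2 : Matrix (Fin L) (Fin L) ℂ) (T2 : Matrix (Fin M) (Fin M) ℂ)
    (hT1 : T1.PosSemidef) (hR2 : R2.PosSemidef) (hT2 : T2.PosSemidef)
    (htr1 : 0 < ((R2 * T1).trace).re) (htr2 : 0 < (T2.trace).re)
    (y0 sbar : ℝ) (hy0 : 0 < y0) (hs : 0 ≤ sbar) :
    ∃! p : ℝ × ℝ, (0 < p.1 ∧ 0 < p.2) ∧
      (p.1 : ℂ) = (L : ℂ)⁻¹ * (R2 * T1 *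
        (y0 • (1 : Matrix (Fin L) (Fin L) ℂ) + sbar • T1 + (y0 * p.2) • (R2 * T1))⁻¹).trace ∧
      (p.2 : ℂ) = (M : ℂ)⁻¹ * (T2 *
        (y0 • (1 : Matrix (Fin M) (Fin M) ℂ) + ((L / M : ℝ) * y0 * p.1) • T2)⁻¹).trace := by
  classical
  have hLR : (0:ℝ) < L := by exact_mod_cast hL
  have hMR : (0:ℝ) < M := by exact_mod_cast hM
  obtain ⟨H, hHpsd, hHtr, hred⟩ := eq1_reduce T1 R2 hT1 hR2 htr1 y0 sbar hy0 hs
  obtain ⟨μ, hμ0, hμtr, hμform⟩ := psd_trace_resolvent H hHpsd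
  obtain ⟨t, ht0, httr, htform⟩ := psd_trace_resolvent T2 hT2
  have hμsum : 0 < ∑ i, μ i := by
    rcases lt_or_eq_of_le (Finset.sum_nonneg fun i _ => hμ0 i) with h | h
    · exact h
    · exact absurd (by rw [hμtr, ← h]; norm_num) hHtr
  have htsum : 0 < ∑ j, t j := by
    have : (T2.trace).re = ∑ j, t j := by rw [httr]; simp
    linarith [htr2, this]
  -- scalar data
  set p : Fin L → ℝ := fun i => μ i / L with hpdef
  set q : Fin L → ℝ := fun i => y0 * μ i with hqdef
  set r : Fin M → ℝ := fun j => t j / (M * y0) with hrdef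
  set s : Fin M → ℝ := fun j => (L / M : ℝ) * t j with hsdef
  have hp : ∀ i, 0 ≤ p i := fun i => div_nonneg (hμ0 i) hLR.le
  have hq : ∀ i, 0 ≤ q i := fun i => mul_nonneg hy0.le (hμ0 i)
  have hr : ∀ j, 0 ≤ r j := fun j => div_nonneg (ht0 j) (by positivity)
  have hs' : ∀ j, 0 ≤ s j := fun j => mul_nonneg (by positivity) (ht0 j)
  have hP : 0 < ∑ i, p i := by
    rw [hpdef, ← Finset.sum_div]
    positivity
  have hR : 0 < ∑ j, r j := by
    rw [hrdef, ← Finset.sum_div]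
    positivity
  -- equivalences between the complex trace equations and scalar equations
  have equiv1 : ∀ ω γ : ℝ, 0 ≤ γ →
      (((ω:ℂ) = (L : ℂ)⁻¹ * (R2 * T1 *
        (y0 • (1 : Matrix (Fin L) (Fin L) ℂ) + sbar • T1 + (y0 * γ) • (R2 * T1))⁻¹).trace)
        ↔ ω = fsum p q γ) := by
    intro ω γ hγ
    have hc : (0:ℝ) ≤ y0 * γ := mul_nonneg hy0.le hγ
    rw [hred _ hc, hμform 1 (y0 * γ) one_pos hc]
    have : (L : ℂ)⁻¹ * ((∑ i, μ i / (1 + y0 * γ * μ i) : ℝ) : ℂ)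
        = (((L:ℝ)⁻¹ * ∑ i, μ i / (1 + y0 * γ * μ i) : ℝ) : ℂ) := by push_cast; ring
    rw [this, Complex.ofReal_inj]
    have : (L:ℝ)⁻¹ * ∑ i, μ i / (1 + y0 * γ * μ i) = fsum p q γ := by
      rw [fsum, Finset.mul_sum]
      refine Finset.sum_congr rfl fun i _ => ?_
      rw [hpdef, hqdef]
      ring
    rw [this]
  have equiv2 : ∀ ω γ : ℝ, 0 ≤ ω →
      (((γ:ℂ) = (M : ℂ)⁻¹ * (T2 *
        (y0 • (1 : Matrix (Fin M) (Fin M) ℂ) + ((L / M : ℝ) * y0 * ω) • T2)⁻¹).trace)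
        ↔ γ = fsum r s ω) := by
    intro ω γ hω
    have hc : (0:ℝ) ≤ (L / M : ℝ) * y0 * ω := by positivity
    rw [Matrix.trace_mul_comm, htform y0 _ hy0 hc]
    have : (M : ℂ)⁻¹ * ((∑ j, t j / (y0 + (L / M : ℝ) * y0 * ω * t j) : ℝ) : ℂ)
        = (((M:ℝ)⁻¹ * ∑ j, t j / (y0 + (L / M : ℝ) * y0 * ω * t j) : ℝ) : ℂ) := by
      push_cast; ring
    rw [this, Complex.ofReal_inj]
    have : (M:ℝ)⁻¹ * ∑ j, t j / (y0 + (L / M : ℝ) * y0 * ω * t j) = fsum r s ω := by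
      rw [fsum, Finset.mul_sum]
      refine Finset.sum_congr rfl fun j _ => ?_
      rw [hrdef, hsdef]
      have hnn : (0:ℝ) ≤ (L / M : ℝ) * y0 * ω * t j :=
        mul_nonneg (mul_nonneg (mul_nonneg (by positivity) hy0.le) hω) (ht0 j)
      have h1 : (0:ℝ) < y0 + (L / M : ℝ) * y0 * ω * t j :=
        add_pos_of_pos_of_nonneg hy0 hnn
      have hnn2 : (0:ℝ) ≤ ω * ((L / M : ℝ) * t j) :=
        mul_nonneg hω (mul_nonneg (by positivity) (ht0 j))
      have h2 : (0:ℝ) < 1 + ω * ((L / M : ℝ) * t j) := by linarith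
      have hM' : (M:ℝ) ≠ 0 := hMR.ne'
      have e : (M:ℝ) * y0 * (1 + ω * ((L / M : ℝ) * t j))
          = (M:ℝ) * (y0 + (L / M : ℝ) * y0 * ω * t j) := by
        field_simp
      have goal' : t j / ((M:ℝ) * y0) / (1 + ω * ((L / M : ℝ) * t j))
          = t j / ((M:ℝ) * (y0 + (L / M : ℝ) * y0 * ω * t j)) := by
        rw [div_div, e]
      rw [goal', inv_mul_eq_div, div_right_comm, div_div]
    rw [this]
  -- the scalar existence/uniqueness
  obtain ⟨ω, ⟨hωpos, hωfix⟩, hωuniq⟩ := scalar_exu p q r s hp hq hr hs' hP hR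
  set γ : ℝ := fsum r s ω with hγdef
  have hγpos : 0 < γ := fsum_pos hr hs' hR hωpos.le
  refine ⟨(ω, γ), ⟨⟨hωpos, hγpos⟩, ?_, ?_⟩, ?_⟩
  · exact (equiv1 ω γ hγpos.le).mpr (by rw [hγdef]; exact hωfix)
  · exact (equiv2 ω γ hωpos.le).mpr hγdef
  · rintro ⟨ω', γ'⟩ ⟨⟨hω'pos, hγ'pos⟩, he1, he2⟩
    have hg2 : γ' = fsum r s ω' := (equiv2 ω' γ' hω'pos.le).mp he2
    have hg1 : ω' = fsum p q γ' := (equiv1 ω' γ' hγ'pos.le).mp he1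
    have hω' : ω' = ω := hωuniq ω' ⟨hω'pos, by nth_rewrite 1 [hg1]; rw [hg2]⟩
    have : γ' = γ := by rw [hg2, hω', hγdef]
    simp [hω', this]
end
end

section
/- For every y ∈ ℂ∖[0,∞) the matrix −y·I_L + s̄·T1 − y·γ⁰(y)·P is invertible; the map F : y ↦ (−y·I_L + s̄·T1 − y·γ⁰(y)·P)⁻¹ is holomorphic on ℂ∖[0,∞); and its spectral norm satisfies ‖F(y)‖ ≤ 1/dist(y, [0,∞)) for every y ∈ ℂ∖[0,∞). -/
open Matrix MeasureTheory
open scoped Matrix.Norms.L2Operator ComplexOrder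

noncomputable section

/-- The square root of a positive semidefinite matrix (removed from Mathlib; old definition). -/
def Matrix.PosSemidef.sqrt {n 𝕜 : Type*} [Fintype n] [RCLike 𝕜] [DecidableEq n]
    {A : Matrix n n 𝕜} (hA : A.PosSemidef) : Matrix n n 𝕜 :=
  hA.1.eigenvectorUnitary.1 * diagonal ((↑) ∘ (√·) ∘ hA.1.eigenvalues) *
    (star hA.1.eigenvectorUnitary : Matrix n n 𝕜)

/-- `y` lies in `ℂ ∖ [0, ∞)`. -/
def OffRay (y : ℂ) : Prop := y.im ≠ 0 ∨ y.re < 0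

/-- The Stieltjes transform of a (finite positive Borel) measure on `ℝ`. -/
def stieltjesT (μ : Measure ℝ) (z : ℂ) : ℂ := ∫ t, ((t : ℂ) - z)⁻¹ ∂μ

namespace StieltjesAux

abbrev Ray : Set ℂ := Complex.ofReal '' Set.Ici (0 : ℝ)

lemma isClosed_ray : IsClosed Ray :=
  Complex.isometry_ofReal.isClosedEmbedding.isClosedMap _ isClosed_Ici

lemma not_mem_ray {y : ℂ} (hy : OffRay y) : y ∉ Ray := by
  rintro ⟨t, ht, rfl⟩
  rcases hy with h | h
  · exact h (Complex.ofReal_im t)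
  · rw [Complex.ofReal_re] at h; exact absurd ht (by simpa using not_le.2 h)

lemma d_pos {y : ℂ} (hy : OffRay y) : 0 < Metric.infDist y Ray :=
  (isClosed_ray.notMem_iff_infDist_pos ⟨0, 0, Set.self_mem_Ici, by simp⟩).1 (not_mem_ray hy)

lemma ae_nonneg (μ0 : Measure ℝ) (hsupp : μ0 (Set.Iio 0) = 0) : ∀ᵐ t ∂μ0, (0:ℝ) ≤ t := by
  rw [MeasureTheory.ae_iff]
  simpa [Set.Iio, not_le] using hsupp

lemma ae_dist_le (μ0 : Measure ℝ) (hsupp : μ0 (Set.Iio 0) = 0) (y : ℂ) :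
    ∀ᵐ t : ℝ ∂μ0, Metric.infDist y Ray ≤ ‖(t : ℂ) - y‖ := by
  filter_upwards [ae_nonneg μ0 hsupp] with t ht
  have : dist y ((t:ℂ)) = ‖(t:ℂ) - y‖ := by rw [dist_eq_norm, norm_sub_rev]
  rw [← this]
  exact Metric.infDist_le_dist_of_mem ⟨t, ht, rfl⟩

lemma integrable_resolvent (μ0 : Measure ℝ) [IsFiniteMeasure μ0]
    (hsupp : μ0 (Set.Iio 0) = 0) {y : ℂ} (hy : OffRay y) :
    Integrable (fun t : ℝ => ((t : ℂ) - y)⁻¹) μ0 := by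
  have hmeas : AEStronglyMeasurable (fun t : ℝ => ((t : ℂ) - y)⁻¹) μ0 :=
    ((Complex.measurable_ofReal.sub measurable_const).inv).aestronglyMeasurable
  refine (integrable_const ((Metric.infDist y Ray)⁻¹)).mono' hmeas ?_
  filter_upwards [ae_dist_le μ0 hsupp y] with t ht
  rw [norm_inv]
  exact inv_anti₀ (d_pos hy) ht

lemma im_g (y : ℂ) (t : ℝ) :
    (-(y * ((t:ℂ) - y)⁻¹)).im = -(y.im * t) / Complex.normSq ((t:ℂ) - y) := by
  by_cases h : (t:ℂ) - y = 0
  · simp [h]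
  · have hn : Complex.normSq ((t:ℂ) - y) ≠ 0 := by simpa using h
    simp only [Complex.neg_im, Complex.mul_im, Complex.inv_re, Complex.inv_im,
      Complex.sub_re, Complex.sub_im, Complex.ofReal_re, Complex.ofReal_im]
    field_simp
    ring

lemma re_g (y : ℂ) (t : ℝ) :
    (-(y * ((t:ℂ) - y)⁻¹)).re = (Complex.normSq y - y.re * t) / Complex.normSq ((t:ℂ) - y) := by
  by_cases h : (t:ℂ) - y = 0
  · have hy : y = (t:ℂ) := by linear_combination -h
    simp [h, hy, Complex.normSq_ofReal]
  · have hn : Complex.normSq ((t:ℂ) - y) ≠ 0 := by simpa using h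
    simp only [Complex.neg_re, Complex.mul_re, Complex.inv_re, Complex.inv_im,
      Complex.sub_re, Complex.sub_im, Complex.ofReal_re, Complex.ofReal_im,
      Complex.normSq_apply]
    field_simp
    ring

lemma abs_le_abs_add_of_mul_nonneg {u v : ℝ} (h : 0 ≤ u * v) : |u| ≤ |u + v| := by
  rw [← Real.sqrt_sq_eq_abs, ← Real.sqrt_sq_eq_abs]
  apply Real.sqrt_le_sqrt
  nlinarith [sq_nonneg v]

lemma le_of_sq_le_sq' {a b : ℝ} (h : a^2 ≤ b^2) (hb : 0 ≤ b) : a ≤ b := by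
  nlinarith [sq_nonneg (a - b), sq_nonneg (a + b)]

lemma neg_mul_st (μ0 : Measure ℝ) {y : ℂ} :
    -(y * stieltjesT μ0 y) = ∫ t, -(y * ((t:ℂ) - y)⁻¹) ∂μ0 := by
  rw [stieltjesT, ← integral_const_mul, ← integral_neg]

lemma im_sign (μ0 : Measure ℝ) [IsFiniteMeasure μ0]
    (hsupp : μ0 (Set.Iio 0) = 0) {y : ℂ} (hy : OffRay y) :
    y.im * (-(y * stieltjesT μ0 y)).im ≤ 0 := by
  have hint : Integrable (fun t : ℝ => -(y * ((t:ℂ)-y)⁻¹)) μ0 :=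
    ((integrable_resolvent μ0 hsupp hy).const_mul y).neg
  have him : (∫ t, -(y*((t:ℂ)-y)⁻¹) ∂μ0).im = ∫ t, (-(y*((t:ℂ)-y)⁻¹)).im ∂μ0 := by
    simpa using (integral_im hint).symm
  rw [neg_mul_st, him, ← integral_const_mul]
  apply integral_nonpos_of_ae
  filter_upwards [ae_nonneg μ0 hsupp] with t ht
  rw [im_g]
  have h1 : y.im * (-(y.im * t) / Complex.normSq ((t:ℂ) - y))
      = (-(y.im^2 * t)) / Complex.normSq ((t:ℂ) - y) := by ring
  rw [h1]
  apply div_nonpos_of_nonpos_of_nonneg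
  · nlinarith [sq_nonneg y.im]
  · exact Complex.normSq_nonneg _

lemma re_sign (μ0 : Measure ℝ) [IsFiniteMeasure μ0]
    (hsupp : μ0 (Set.Iio 0) = 0) {y : ℂ} (hy : OffRay y) (hre : y.re ≤ 0) :
    0 ≤ (-(y * stieltjesT μ0 y)).re := by
  have hint : Integrable (fun t : ℝ => -(y * ((t:ℂ)-y)⁻¹)) μ0 :=
    ((integrable_resolvent μ0 hsupp hy).const_mul y).neg
  have hre' : (∫ t, -(y*((t:ℂ)-y)⁻¹) ∂μ0).re = ∫ t, (-(y*((t:ℂ)-y)⁻¹)).re ∂μ0 := by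
    simpa using (integral_re hint).symm
  rw [neg_mul_st, hre']
  apply integral_nonneg_of_ae
  filter_upwards [ae_nonneg μ0 hsupp] with t ht
  rw [re_g]
  apply div_nonneg _ (Complex.normSq_nonneg _)
  nlinarith [Complex.normSq_nonneg y]

lemma key_scalar (μ0 : Measure ℝ) [IsFiniteMeasure μ0] (hsupp : μ0 (Set.Iio 0) = 0)
    (sbar : ℝ) (hs : 0 ≤ sbar) {y : ℂ} (hy : OffRay y)
    {n a b : ℝ} (hn : 0 ≤ n) (ha : 0 ≤ a) (hb : 0 ≤ b) :
    Metric.infDist y Ray * n ≤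
      ‖((-y) * (n:ℂ) + (sbar:ℂ) * (a:ℂ) + (-(y * stieltjesT μ0 y)) * (b:ℂ))‖ := by
  have him := im_sign μ0 hsupp hy
  set γ := -(y * stieltjesT μ0 y) with hγ
  set z := (-y) * (n:ℂ) + (sbar:ℂ) * (a:ℂ) + γ * (b:ℂ) with hz
  have hzre : z.re = -y.re * n + sbar * a + γ.re * b := by
    simp [hz, Complex.add_re, Complex.mul_re, Complex.mul_im, Complex.ofReal_re,
      Complex.ofReal_im, Complex.neg_re, Complex.neg_im]
  have hzim : z.im = -y.im * n + γ.im * b := by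
    simp [hz, Complex.add_im, Complex.mul_re, Complex.mul_im, Complex.ofReal_re,
      Complex.ofReal_im, Complex.neg_re, Complex.neg_im]
  have h1 : |(-y.im) * n| ≤ |(-y.im) * n + γ.im * b| :=
    abs_le_abs_add_of_mul_nonneg (by nlinarith [mul_nonneg (neg_nonneg.2 him) (mul_nonneg hn hb)])
  have h1' : |y.im| * n ≤ |z.im| := by
    rw [hzim]
    calc |y.im| * n = |(-y.im) * n| := by rw [abs_mul, abs_neg, abs_of_nonneg hn]
      _ ≤ _ := h1
  have him2 : (y.im * n)^2 ≤ z.im^2 := by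
    have e1 : (y.im * n)^2 = (|y.im| * n)^2 := by rw [mul_pow, mul_pow, sq_abs]
    have e2 : z.im^2 = (|z.im|)^2 := (sq_abs z.im).symm
    rw [e1, e2]
    exact pow_le_pow_left₀ (by positivity) h1' 2
  rcases lt_or_ge y.re 0 with hre | hre
  · have hR := re_sign μ0 hsupp hy hre.le
    have hd : Metric.infDist y Ray ≤ ‖y‖ := by
      have h0 : (0:ℂ) ∈ Ray := ⟨0, Set.self_mem_Ici, by simp⟩
      simpa [Complex.dist_eq] using Metric.infDist_le_dist_of_mem h0
    have hzre' : -y.re * n ≤ z.re := by rw [hzre]; nlinarith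
    have h2 : (‖y‖ * n)^2 ≤ (‖z‖)^2 := by
      rw [mul_pow, Complex.sq_norm, Complex.sq_norm, Complex.normSq_apply, Complex.normSq_apply]
      nlinarith [him2, hzre',
        mul_self_le_mul_self (mul_nonneg (neg_nonneg.2 hre.le) hn) hzre']
    calc Metric.infDist y Ray * n ≤ ‖y‖ * n :=
          mul_le_mul_of_nonneg_right hd hn
      _ ≤ ‖z‖ := le_of_sq_le_sq' h2 (norm_nonneg z)
  · have hyim : y.im ≠ 0 := hy.resolve_right (not_lt.2 hre)
    have hd : Metric.infDist y Ray ≤ |y.im| := by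
      have hmem : (y.re : ℂ) ∈ Ray := ⟨y.re, hre, rfl⟩
      have hdist : dist y ((y.re : ℂ)) = |y.im| := by
        rw [Complex.dist_eq, Complex.norm_def]
        have : Complex.normSq (y - (y.re:ℂ)) = y.im^2 := by
          simp [Complex.normSq_apply, Complex.sub_re, Complex.sub_im]
          ring
        rw [this, Real.sqrt_sq_eq_abs]
      calc Metric.infDist y Ray ≤ dist y ((y.re:ℂ)) := Metric.infDist_le_dist_of_mem hmem
        _ = |y.im| := hdist
    calc Metric.infDist y Ray * n ≤ |y.im| * n := mul_le_mul_of_nonneg_right hd hn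
      _ ≤ |z.im| := h1'
      _ ≤ ‖z‖ := Complex.abs_im_le_norm z

variable {L : ℕ}

lemma posSemidef_sqrt' {A : Matrix (Fin L) (Fin L) ℂ} (hA : A.PosSemidef) : hA.sqrt.PosSemidef := by
  unfold Matrix.PosSemidef.sqrt
  have hd : (diagonal ((↑) ∘ (√·) ∘ hA.1.eigenvalues) : Matrix (Fin L) (Fin L) ℂ).PosSemidef := by
    apply PosSemidef.diagonal
    intro i
    simp only [Function.comp_apply, Pi.zero_apply]
    exact_mod_cast Real.sqrt_nonneg _
  have := hd.mul_mul_conjTranspose_same (hA.1.eigenvectorUnitary : Matrix (Fin L) (Fin L) ℂ)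
  exact this

/-- The matrix in question, with an abstract value `g` in place of `γ⁰(y)`. -/
def Mmat (T1 P : Matrix (Fin L) (Fin L) ℂ) (sbar : ℝ) (g : ℂ) (y : ℂ) :
    Matrix (Fin L) (Fin L) ℂ :=
  (-y) • (1 : Matrix (Fin L) (Fin L) ℂ) + (sbar : ℂ) • T1 + (-(y * g)) • P

lemma quad_form (T1 P : Matrix (Fin L) (Fin L) ℂ) (sbar : ℝ) (g y : ℂ) (x : Fin L → ℂ) :
    star x ⬝ᵥ (Mmat T1 P sbar g y *ᵥ x) =
      (-y) * (star x ⬝ᵥ x) + (sbar:ℂ) * (star x ⬝ᵥ (T1 *ᵥ x))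
        + (-(y * g)) * (star x ⬝ᵥ (P *ᵥ x)) := by
  simp [Mmat, Matrix.add_mulVec, Matrix.smul_mulVec, dotProduct_add,
    dotProduct_smul, smul_eq_mul, Matrix.one_mulVec, Matrix.neg_mulVec, dotProduct_neg]
  try ring

lemma nonneg_coe {c : ℂ} (hc : 0 ≤ c) : c = ((c.re : ℝ) : ℂ) ∧ 0 ≤ c.re := by
  obtain ⟨h1, h2⟩ := Complex.nonneg_iff.1 hc
  exact ⟨Complex.ext rfl (by simp [← h2]), h1⟩

lemma mulVec_lower (μ0 : Measure ℝ) [IsFiniteMeasure μ0] (hsupp : μ0 (Set.Iio 0) = 0)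
    (T1 P : Matrix (Fin L) (Fin L) ℂ) (hT1 : T1.PosSemidef) (hPP : P.PosSemidef)
    (sbar : ℝ) (hs : 0 ≤ sbar) {y : ℂ} (hy : OffRay y) (x : Fin L → ℂ) :
    Metric.infDist y Ray * ‖(WithLp.equiv 2 (Fin L → ℂ)).symm x‖ ≤
      ‖(WithLp.equiv 2 (Fin L → ℂ)).symm (Mmat T1 P sbar (stieltjesT μ0 y) y *ᵥ x)‖ := by
  set v : EuclideanSpace ℂ (Fin L) := (WithLp.equiv 2 (Fin L → ℂ)).symm x with hv
  set u : EuclideanSpace ℂ (Fin L) :=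
    (WithLp.equiv 2 (Fin L → ℂ)).symm (Mmat T1 P sbar (stieltjesT μ0 y) y *ᵥ x) with hu
  have hn : star x ⬝ᵥ x = ((‖v‖^2 : ℝ) : ℂ) := by
    have e : (inner ℂ v v : ℂ) = star x ⬝ᵥ x :=
      (EuclideanSpace.inner_toLp_toLp _ _).trans (dotProduct_comm _ _)
    rw [← e, inner_self_eq_norm_sq_to_K]
    norm_cast
  obtain ⟨ha1, ha2⟩ := nonneg_coe (hT1.dotProduct_mulVec_nonneg x)
  obtain ⟨hb1, hb2⟩ := nonneg_coe (hPP.dotProduct_mulVec_nonneg x)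
  have hinner : (inner ℂ v u : ℂ) = star x ⬝ᵥ (Mmat T1 P sbar (stieltjesT μ0 y) y *ᵥ x) :=
    (EuclideanSpace.inner_toLp_toLp _ _).trans (dotProduct_comm _ _)
  have hkey : Metric.infDist y Ray * ‖v‖^2 ≤ ‖(inner ℂ v u : ℂ)‖ := by
    rw [hinner, quad_form, hn, ha1, hb1]
    exact key_scalar μ0 hsupp sbar hs hy (by positivity) ha2 hb2
  have hcs : ‖(inner ℂ v u : ℂ)‖ ≤ ‖v‖ * ‖u‖ := by
    exact norm_inner_le_norm v u
  rcases eq_or_lt_of_le (norm_nonneg v) with h0 | h0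
  · rw [← h0, mul_zero]; positivity
  · have := hkey.trans hcs
    have h2 : Metric.infDist y Ray * (‖v‖ * ‖v‖) ≤ (‖v‖ * ‖u‖) := by
      calc Metric.infDist y Ray * (‖v‖ * ‖v‖) = Metric.infDist y Ray * ‖v‖^2 := by ring
        _ ≤ _ := this
    nlinarith [h2, h0]

lemma isUnit_M (μ0 : Measure ℝ) [IsFiniteMeasure μ0] (hsupp : μ0 (Set.Iio 0) = 0)
    (T1 P : Matrix (Fin L) (Fin L) ℂ) (hT1 : T1.PosSemidef) (hPP : P.PosSemidef)
    (sbar : ℝ) (hs : 0 ≤ sbar) {y : ℂ} (hy : OffRay y) :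
    IsUnit (Mmat T1 P sbar (stieltjesT μ0 y) y) := by
  rw [← Matrix.mulVec_injective_iff_isUnit]
  set M := Mmat T1 P sbar (stieltjesT μ0 y) y with hM
  intro x₁ x₂ h
  have hsub : M *ᵥ (x₁ - x₂) = 0 := by
    rw [Matrix.mulVec_sub]
    show M.mulVec x₁ - M.mulVec x₂ = 0
    rw [h, sub_self]
  have hle := mulVec_lower μ0 hsupp T1 P hT1 hPP sbar hs hy (x₁ - x₂)
  rw [← hM, hsub, show (WithLp.equiv 2 (Fin L → ℂ)).symm 0 = 0 from rfl, norm_zero] at hle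
  have hd := d_pos hy
  have h0 : ‖(WithLp.equiv 2 (Fin L → ℂ)).symm (x₁ - x₂)‖ = 0 := by
    have hnn := norm_nonneg ((WithLp.equiv 2 (Fin L → ℂ)).symm (x₁ - x₂))
    nlinarith
  have h1 : (WithLp.equiv 2 (Fin L → ℂ)).symm (x₁ - x₂) = (WithLp.equiv 2 (Fin L → ℂ)).symm 0 := by
    rw [show (WithLp.equiv 2 (Fin L → ℂ)).symm 0 = 0 from rfl]; exact norm_eq_zero.1 h0
  have := (WithLp.equiv 2 (Fin L → ℂ)).symm.injective h1
  exact sub_eq_zero.1 this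

lemma norm_inv_le (μ0 : Measure ℝ) [IsFiniteMeasure μ0] (hsupp : μ0 (Set.Iio 0) = 0)
    (T1 P : Matrix (Fin L) (Fin L) ℂ) (hT1 : T1.PosSemidef) (hPP : P.PosSemidef)
    (sbar : ℝ) (hs : 0 ≤ sbar) {y : ℂ} (hy : OffRay y) :
    ‖(Mmat T1 P sbar (stieltjesT μ0 y) y)⁻¹‖ ≤ 1 / Metric.infDist y Ray := by
  have hd := d_pos hy
  set M := Mmat T1 P sbar (stieltjesT μ0 y) y with hM
  have hU : IsUnit M := isUnit_M μ0 hsupp T1 P hT1 hPP sbar hs hy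
  rw [Matrix.l2_opNorm_def]
  apply ContinuousLinearMap.opNorm_le_bound _ (by positivity)
  intro v
  have happ : Matrix.toEuclideanCLM (𝕜 := ℂ) M⁻¹ v =
      (WithLp.equiv 2 (Fin L → ℂ)).symm (M⁻¹ *ᵥ (WithLp.equiv 2 (Fin L → ℂ)) v) := by
    rfl
  have hMw : M *ᵥ (M⁻¹ *ᵥ (WithLp.equiv 2 (Fin L → ℂ)) v) = (WithLp.equiv 2 (Fin L → ℂ)) v := by
    rw [Matrix.mulVec_mulVec, Matrix.mul_nonsing_inv _ ((Matrix.isUnit_iff_isUnit_det _).1 hU),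
      Matrix.one_mulVec]
  have hle := mulVec_lower μ0 hsupp T1 P hT1 hPP sbar hs hy
    (M⁻¹ *ᵥ (WithLp.equiv 2 (Fin L → ℂ)) v)
  rw [← hM, hMw, Equiv.symm_apply_apply] at hle
  rw [show ((Matrix.toEuclideanLin (𝕜 := ℂ) (m := Fin L) (n := Fin L)).trans LinearMap.toContinuousLinearMap) M⁻¹ v = (WithLp.equiv 2 (Fin L → ℂ)).symm (M⁻¹ *ᵥ (WithLp.equiv 2 (Fin L → ℂ)) v) from rfl]
  rw [one_div, inv_mul_eq_div, le_div_iff₀ hd]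
  linarith

lemma stieltjesT_differentiableAt (μ0 : Measure ℝ) [IsFiniteMeasure μ0]
    (hsupp : μ0 (Set.Iio 0) = 0) {y₀ : ℂ} (hy : OffRay y₀) :
    DifferentiableAt ℂ (stieltjesT μ0) y₀ := by
  set d := Metric.infDist y₀ Ray with hdd
  have hd : 0 < d := d_pos hy
  have hlow : ∀ᵐ t : ℝ ∂μ0, ∀ x ∈ Metric.ball y₀ (d/2), d/2 ≤ ‖(t:ℂ) - x‖ := by
    filter_upwards [ae_dist_le μ0 hsupp y₀] with t ht x hx
    have h1 : ‖(t:ℂ) - y₀‖ - ‖x - y₀‖ ≤ ‖(t:ℂ) - x‖ := by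
      have := norm_sub_norm_le ((t:ℂ) - y₀) (x - y₀)
      simpa [sub_sub_sub_cancel_right] using this
    have h2 : ‖x - y₀‖ < d/2 := by rwa [Metric.mem_ball, dist_eq_norm] at hx
    linarith
  have key := hasDerivAt_integral_of_dominated_loc_of_deriv_le (μ := μ0)
      (F := fun (y : ℂ) (t : ℝ) => ((t:ℂ) - y)⁻¹)
      (F' := fun (y : ℂ) (t : ℝ) => (((t:ℂ) - y)^2)⁻¹)
      (x₀ := y₀) (bound := fun _ => ((d/2)^2)⁻¹)
      (Metric.ball_mem_nhds y₀ (half_pos hd))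
      (Filter.Eventually.of_forall fun x =>
        ((Complex.measurable_ofReal.sub measurable_const).inv).aestronglyMeasurable)
      (integrable_resolvent μ0 hsupp hy)
      ((((Complex.measurable_ofReal.sub measurable_const).pow_const 2).inv).aestronglyMeasurable)
      ?_ (integrable_const _) ?_
  · exact key.2.differentiableAt
  · filter_upwards [hlow] with t ht x hx
    have h1 : d/2 ≤ ‖(t:ℂ) - x‖ := ht x hx
    rw [norm_inv, norm_pow]
    have h2 : (d/2)^2 ≤ ‖(t:ℂ) - x‖^2 := by nlinarith
    exact inv_anti₀ (by positivity) h2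
  · filter_upwards [hlow] with t ht x hx
    have h1 : (t:ℂ) - x ≠ 0 := by
      intro h
      have := ht x hx
      rw [h, norm_zero] at this
      linarith
    have hder : HasDerivAt (fun y : ℂ => (t:ℂ) - y) (-1) x := by
      simpa using (hasDerivAt_id x).const_sub (t:ℂ)
    have := hder.inv h1
    exact (by simpa using this : HasDerivAt (fun y : ℂ => (t:ℂ) - y)⁻¹ (((t:ℂ) - x)^2)⁻¹ x)

lemma isOpen_offRay : IsOpen {y : ℂ | OffRay y} := by
  have : {y : ℂ | OffRay y} = (Complex.im ⁻¹' {0}ᶜ) ∪ (Complex.re ⁻¹' Set.Iio 0) := by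
    ext y; simp [OffRay]
  rw [this]
  exact ((isOpen_compl_singleton).preimage Complex.continuous_im).union
    (isOpen_Iio.preimage Complex.continuous_re)

end StieltjesAux

open StieltjesAux

/-- Invertibility, holomorphy, and the resolvent-type norm bound for
`F(y) = (−y·I + s̄·T1 − y·γ⁰(y)·P)⁻¹` on `ℂ ∖ [0,∞)`. -/
theorem matrixF_invertible_holomorphic_norm_bound
    (L : ℕ) (T1 R2 : Matrix (Fin L) (Fin L) ℂ)
    (hT1 : T1.PosSemidef) (hR2 : R2.PosSemidef)
    (P : Matrix (Fin L) (Fin L) ℂ) (hP : P = hT1.sqrt * R2 * hT1.sqrt)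
    (sbar : ℝ) (hs : 0 ≤ sbar)
    (μ0 : Measure ℝ) (hfin : IsFiniteMeasure μ0) (hsupp : μ0 (Set.Iio 0) = 0)
    (γ0 : ℂ → ℂ) (hγ0 : ∀ y : ℂ, OffRay y → γ0 y = stieltjesT μ0 y) :
    (∀ y : ℂ, OffRay y →
      IsUnit ((-y) • (1 : Matrix (Fin L) (Fin L) ℂ) + (sbar : ℂ) • T1 + (-(y * γ0 y)) • P)) ∧
    DifferentiableOn ℂ
      (fun y : ℂ =>
        ((-y) • (1 : Matrix (Fin L) (Fin L) ℂ) + (sbar : ℂ) • T1 + (-(y * γ0 y)) • P)⁻¹)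
      {y : ℂ | OffRay y} ∧
    (∀ y : ℂ, OffRay y →
      ‖((-y) • (1 : Matrix (Fin L) (Fin L) ℂ) + (sbar : ℂ) • T1 + (-(y * γ0 y)) • P)⁻¹‖ ≤
        1 / Metric.infDist y (Complex.ofReal '' Set.Ici (0 : ℝ))) := by
  haveI := hfin
  have hPP : P.PosSemidef := by
    have hsq := posSemidef_sqrt' hT1
    have h2 := hR2.mul_mul_conjTranspose_same hT1.sqrt
    rw [hsq.isHermitian.eq] at h2
    rw [hP]
    exact h2
  have hMeq : ∀ y : ℂ, OffRay y →
      (-y) • (1 : Matrix (Fin L) (Fin L) ℂ) + (sbar : ℂ) • T1 + (-(y * γ0 y)) • P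
        = Mmat T1 P sbar (stieltjesT μ0 y) y := by
    intro y hy
    rw [Mmat, hγ0 y hy]
  refine ⟨?_, ?_, ?_⟩
  · intro y hy
    rw [hMeq y hy]
    exact isUnit_M μ0 hsupp T1 P hT1 hPP sbar hs hy
  · haveI : CompleteSpace (Matrix (Fin L) (Fin L) ℂ) := FiniteDimensional.complete ℂ _
    have hMdiff : ∀ y₀ ∈ {y : ℂ | OffRay y},
        DifferentiableAt ℂ (fun y => Mmat T1 P sbar (stieltjesT μ0 y) y) y₀ := by
      intro y₀ hy₀
      apply DifferentiableAt.add
      apply DifferentiableAt.add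
      · exact (differentiable_id.neg.differentiableAt).smul_const _
      · exact differentiableAt_const _
      · exact ((differentiableAt_id.mul
          (stieltjesT_differentiableAt μ0 hsupp hy₀)).neg).smul_const P
    have hdiff : DifferentiableOn ℂ
        (fun y => Ring.inverse (Mmat T1 P sbar (stieltjesT μ0 y) y)) {y : ℂ | OffRay y} := by
      intro y hy
      exact ((hMdiff y hy).inverse
        (isUnit_M μ0 hsupp T1 P hT1 hPP sbar hs hy)).differentiableWithinAt
    apply hdiff.congr
    intro y hy
    rw [hMeq y hy, Matrix.nonsing_inv_eq_ringInverse]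
  · intro y hy
    rw [hMeq y hy]
    exact norm_inv_le μ0 hsupp T1 P hT1 hPP sbar hs hy
end
end

section
/- Let (δ, ω̄, ω̲, γ) be a positive solution of system (I) at parameters s̄ ≥ 0 and z > 0. Then ω̲₂ᴵ ≥ l/(1 + N·(s̄·r² + r⁴)/(L·z))². -/
open Matrix
open scoped Matrix.Norms.L2Operator ComplexOrder
set_option linter.unusedSectionVars false

namespace SysIAux
variable {n : Type*} [Fintype n] [DecidableEq n]

lemma dot_eq_inner (u v : n → ℂ) :
    star u ⬝ᵥ v = inner ℂ ((WithLp.equiv 2 (n → ℂ)).symm u) ((WithLp.equiv 2 (n → ℂ)).symm v) := by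
  rw [PiLp.inner_apply]
  simp [dotProduct, RCLike.inner_apply']
  exact Finset.sum_congr rfl fun i _ => mul_comm _ _

open scoped MatrixOrder in
lemma exists_sqrt {A : Matrix n n ℂ} (hA : A.PosSemidef) :
    ∃ S : Matrix n n ℂ, S.PosSemidef ∧ S * S = A :=
  ⟨CFC.sqrt A, (CFC.sqrt_nonneg A).posSemidef, CFC.sqrt_mul_sqrt_self A hA.nonneg⟩

lemma nsq_eq_norm (x : n → ℂ) :
    (star x ⬝ᵥ x).re = ‖(WithLp.equiv 2 (n → ℂ)).symm x‖ ^ 2 := by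
  rw [← @inner_self_eq_norm_sq ℂ _ _ _ _ ((WithLp.equiv 2 (n → ℂ)).symm x)]
  exact congrArg Complex.re (dot_eq_inner x x)

lemma re_dot_self_nonneg (u : n → ℂ) : 0 ≤ (star u ⬝ᵥ u).re := by
  rw [nsq_eq_norm]; positivity

lemma re_ip_le (A : Matrix n n ℂ) (x : n → ℂ) :
    (star x ⬝ᵥ A *ᵥ x).re ≤ ‖A‖ * (star x ⬝ᵥ x).re := by
  have h1 : (star x ⬝ᵥ A *ᵥ x) =
      inner ℂ ((WithLp.equiv 2 (n → ℂ)).symm x) ((WithLp.equiv 2 (n → ℂ)).symm (A *ᵥ x)) := dot_eq_inner _ _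
  have h2 := re_inner_le_norm (𝕜 := ℂ) ((WithLp.equiv 2 (n → ℂ)).symm x)
      ((WithLp.equiv 2 (n → ℂ)).symm (A *ᵥ x))
  have h3 := A.l2_opNorm_mulVec ((WithLp.equiv 2 (n → ℂ)).symm x)
  rw [nsq_eq_norm, h1]
  calc RCLike.re (inner ℂ ((WithLp.equiv 2 (n → ℂ)).symm x) ((WithLp.equiv 2 (n → ℂ)).symm (A *ᵥ x)))
      ≤ ‖(WithLp.equiv 2 (n → ℂ)).symm x‖ * ‖(WithLp.equiv 2 (n → ℂ)).symm (A *ᵥ x)‖ := h2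
    _ ≤ ‖(WithLp.equiv 2 (n → ℂ)).symm x‖ * (‖A‖ * ‖(WithLp.equiv 2 (n → ℂ)).symm x‖) := by
        gcongr; exact h3
    _ = ‖A‖ * ‖(WithLp.equiv 2 (n → ℂ)).symm x‖ ^ 2 := by ring

lemma ip_herm_real {A : Matrix n n ℂ} (hA : A.IsHermitian) (x : n → ℂ) :
    star x ⬝ᵥ A *ᵥ x = ((star x ⬝ᵥ A *ᵥ x).re : ℂ) := by
  have h : (starRingEnd ℂ) (star x ⬝ᵥ A *ᵥ x) = star x ⬝ᵥ A *ᵥ x := by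
    calc (starRingEnd ℂ) (star x ⬝ᵥ A *ᵥ x) = star (star x ⬝ᵥ A *ᵥ x) := rfl
      _ = star (A *ᵥ x) ⬝ᵥ x := by rw [star_dotProduct]; simp [dotProduct_comm]
      _ = star x ⬝ᵥ A *ᵥ x := by
          rw [star_mulVec, hA.eq, ← dotProduct_mulVec]
  exact (Complex.conj_eq_iff_re.mp h).symm

lemma re_conj_dot (u v : n → ℂ) : (star u ⬝ᵥ v).re = (star v ⬝ᵥ u).re := by
  have : star v ⬝ᵥ u = star (star u ⬝ᵥ v) := by rw [star_dotProduct]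
  rw [this, Complex.star_def, Complex.conj_re]

lemma posSemidef_of_re {A : Matrix n n ℂ} (hA : A.IsHermitian)
    (h : ∀ x : n → ℂ, 0 ≤ (star x ⬝ᵥ A *ᵥ x).re) : A.PosSemidef := by
  refine Matrix.PosSemidef.of_dotProduct_mulVec_nonneg hA (fun x => ?_)
  rw [ip_herm_real hA x]
  exact_mod_cast Complex.zero_le_real.mpr (h x)

lemma trace_re_nonneg {A : Matrix n n ℂ} (hA : A.PosSemidef) : 0 ≤ A.trace.re := by
  rw [Matrix.trace]
  simp only [Complex.re_sum, Matrix.diag]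
  apply Finset.sum_nonneg
  intro i _
  have := hA.re_dotProduct_nonneg (Pi.single i 1)
  simpa [Matrix.mulVec_single, dotProduct, Pi.single_apply, Finset.sum_ite_eq] using this

lemma trace_mul_re_nonneg {R H : Matrix n n ℂ} (hR : R.PosSemidef) (hH : H.PosSemidef) :
    0 ≤ ((R * H).trace).re := by
  obtain ⟨S, hS, hSS⟩ := exists_sqrt hR
  have hmul : R * H = S * (S * H) := by
    rw [← Matrix.mul_assoc, hSS]
  have hcyc : (R * H).trace = (S * H * S).trace := by
    rw [hmul, Matrix.trace_mul_comm, Matrix.mul_assoc]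
  rw [hcyc]
  refine trace_re_nonneg ?_
  have := hH.conjTranspose_mul_mul_same S
  rwa [hS.1.eq] at this

lemma trace_re_le_card {A : Matrix n n ℂ} (hA : A.PosSemidef) (r : ℝ) (hAr : ‖A‖ ≤ r) :
    A.trace.re ≤ Fintype.card n * r := by
  have key : ∀ i : n, (A i i).re ≤ r := by
    intro i
    have h1 := re_ip_le A (Pi.single i (1:ℂ))
    have e1 : (star (Pi.single i (1:ℂ)) ⬝ᵥ A *ᵥ Pi.single i 1) = A i i := by
      simp [Matrix.mulVec_single, dotProduct, Pi.single_apply, Finset.sum_ite_eq]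
    have e2 : (star (Pi.single i (1:ℂ)) ⬝ᵥ Pi.single i 1) = 1 := by
      simp [dotProduct, Pi.single_apply, Finset.sum_ite_eq]
    rw [e1, e2] at h1
    simp only [Complex.one_re, mul_one] at h1
    have hnn : (0:ℝ) ≤ ‖A‖ := norm_nonneg _
    linarith
  calc A.trace.re = ∑ i, (A i i).re := by rw [Matrix.trace]; simp [Complex.re_sum, Matrix.diag]
    _ ≤ ∑ _i : n, r := Finset.sum_le_sum (fun i _ => key i)
    _ = Fintype.card n * r := by simp [Finset.sum_const, mul_comm]

lemma normsq_mulVec_le {T : Matrix n n ℂ} (hT : T.PosSemidef) (x : n → ℂ) :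
    ‖(WithLp.equiv 2 (n → ℂ)).symm (T *ᵥ x)‖ ^ 2 ≤ ‖T‖ * (star x ⬝ᵥ T *ᵥ x).re := by
  obtain ⟨S, hSps, hSS⟩ := exists_sqrt hT
  have hTx : T *ᵥ x = S *ᵥ (S *ᵥ x) := by rw [Matrix.mulVec_mulVec, hSS]
  have h1 : ‖(WithLp.equiv 2 (n → ℂ)).symm (T *ᵥ x)‖ ≤
      ‖S‖ * ‖(WithLp.equiv 2 (n → ℂ)).symm (S *ᵥ x)‖ := by
    rw [hTx]; exact S.l2_opNorm_mulVec ((WithLp.equiv 2 (n → ℂ)).symm (S *ᵥ x))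
  have h2 : ‖(WithLp.equiv 2 (n → ℂ)).symm (S *ᵥ x)‖ ^ 2 = (star x ⬝ᵥ T *ᵥ x).re := by
    rw [← @inner_self_eq_norm_sq ℂ _ _ _ _ ((WithLp.equiv 2 (n → ℂ)).symm (S *ᵥ x))]
    have heq : (inner ℂ ((WithLp.equiv 2 (n → ℂ)).symm (S *ᵥ x))
        ((WithLp.equiv 2 (n → ℂ)).symm (S *ᵥ x)) : ℂ) = star x ⬝ᵥ T *ᵥ x := by
      rw [← dot_eq_inner]
      rw [star_mulVec, hSps.1.eq, ← Matrix.dotProduct_mulVec, Matrix.mulVec_mulVec,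
        hSS]
    rw [heq]; rfl
  have h3 : ‖S‖ ^ 2 = ‖T‖ := by
    have := CStarRing.norm_star_mul_self (x := S)
    rw [star_eq_conjTranspose, hSps.1.eq, hSS] at this
    rw [this]; ring
  calc ‖(WithLp.equiv 2 (n → ℂ)).symm (T *ᵥ x)‖ ^ 2
      ≤ (‖S‖ * ‖(WithLp.equiv 2 (n → ℂ)).symm (S *ᵥ x)‖) ^ 2 :=
        pow_le_pow_left₀ (norm_nonneg _) h1 2
    _ = ‖S‖ ^ 2 * ‖(WithLp.equiv 2 (n → ℂ)).symm (S *ᵥ x)‖ ^ 2 := by ring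
    _ = ‖T‖ * (star x ⬝ᵥ T *ᵥ x).re := by rw [h3, h2]

lemma shifted_inv_psd {R : Matrix n n ℂ} (hR : R.PosSemidef) {z c : ℝ}
    (hz : 0 < z) (hc : 0 ≤ c) (hU : IsUnit (z • (1:Matrix n n ℂ) + c • R)) :
    (z⁻¹ • (1:Matrix n n ℂ) - (z • (1:Matrix n n ℂ) + c • R)⁻¹).PosSemidef := by
  set A := z • (1:Matrix n n ℂ) + c • R with hA
  have hAH : A.IsHermitian := by
    unfold Matrix.IsHermitian
    rw [hA, conjTranspose_add, conjTranspose_smul, conjTranspose_smul, conjTranspose_one, hR.1.eq]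
    simp
  have hdet := A.isUnit_iff_isUnit_det.mp hU
  have hmul : A * A⁻¹ = 1 := A.mul_nonsing_inv hdet
  have hAinvH : A⁻¹.IsHermitian := hAH.inv
  have hHerm : (z⁻¹ • (1:Matrix n n ℂ) - A⁻¹).IsHermitian := by
    unfold Matrix.IsHermitian
    rw [conjTranspose_sub, conjTranspose_smul, conjTranspose_one, hAinvH.eq]
    simp
  refine posSemidef_of_re hHerm (fun x => ?_)
  set y := A⁻¹ *ᵥ x with hy
  have hx : x = A *ᵥ y := by
    rw [hy, Matrix.mulVec_mulVec, hmul, Matrix.one_mulVec]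
  set w := R *ᵥ y with hw
  have hAy : A *ᵥ y = z • y + c • w := by
    rw [hA, Matrix.add_mulVec, Matrix.smul_mulVec, Matrix.smul_mulVec,
      Matrix.one_mulVec, hw]
  have expand : star x ⬝ᵥ (z⁻¹ • (1:Matrix n n ℂ) - A⁻¹) *ᵥ x
      = z⁻¹ • (star x ⬝ᵥ x) - star x ⬝ᵥ y := by
    rw [Matrix.sub_mulVec, dotProduct_sub, Matrix.smul_mulVec, Matrix.one_mulVec,
      dotProduct_smul, hy]
  have h1 : star x ⬝ᵥ y = (z:ℂ) * (star y ⬝ᵥ y) + (c:ℂ) * (star y ⬝ᵥ w) := by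
    conv_lhs => rw [hx]
    rw [star_mulVec, hAH.eq, ← dotProduct_mulVec, hAy]
    simp only [dotProduct_add, dotProduct_smul, Complex.real_smul]
  have h2 : star x ⬝ᵥ x = (z:ℂ) * ((z:ℂ) * (star y ⬝ᵥ y)) + (z:ℂ) * ((c:ℂ) * (star y ⬝ᵥ w))
      + (c:ℂ) * ((z:ℂ) * (star w ⬝ᵥ y)) + (c:ℂ) * ((c:ℂ) * (star w ⬝ᵥ w)) := by
    conv_lhs => rw [hx, hAy]
    rw [star_add, star_smul, star_smul]
    simp only [add_dotProduct, dotProduct_add, smul_dotProduct, dotProduct_smul, star_trivial,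
      Complex.real_smul]
    ring
  have ha := re_dot_self_nonneg y
  have hd := re_dot_self_nonneg w
  have hb : 0 ≤ (star y ⬝ᵥ w).re := by rw [hw]; exact hR.re_dotProduct_nonneg y
  have hb' : (star w ⬝ᵥ y).re = (star y ⬝ᵥ w).re := re_conj_dot w y
  rw [expand, h1, h2]
  simp only [Complex.sub_re, Complex.add_re, Complex.real_smul, Complex.re_ofReal_mul]
  rw [hb']
  have hzinv : 0 ≤ z⁻¹ := le_of_lt (inv_pos.mpr hz)
  set B := (star y ⬝ᵥ w).re
  set Aq := (star y ⬝ᵥ y).re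
  set D := (star w ⬝ᵥ w).re
  have hkey : z⁻¹ * (z * (z * Aq) + z * (c * B) + c * (z * B) + c * (c * D))
      - (z * Aq + c * B) = c * B + z⁻¹ * (c * (c * D)) := by
    field_simp
    ring
  have hn1 : 0 ≤ c * B := mul_nonneg hc hb
  have hn2 : 0 ≤ z⁻¹ * (c * (c * D)) := mul_nonneg hzinv (mul_nonneg hc (mul_nonneg hc hd))
  linarith [hkey]



lemma real_eq_of_complex {k : ℕ} {a : ℝ} {t : ℂ} (h : (a:ℂ) = (k:ℂ)⁻¹ * t) :
    a = (k:ℝ)⁻¹ * t.re := by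
  have h2 : (a:ℂ) = (((k:ℝ)⁻¹ : ℝ) : ℂ) * t := by
    rw [h]; push_cast; ring
  have := congrArg Complex.re h2
  simpa [Complex.re_ofReal_mul] using this


-- combine: trace bound for R * A⁻¹ with A = z•1 + c•R'
lemma trace_inv_bound {R R' : Matrix n n ℂ} (hR : R.PosSemidef) (hR' : R'.PosSemidef)
    {z c : ℝ} (hz : 0 < z) (hc : 0 ≤ c)
    (hU : IsUnit (z • (1:Matrix n n ℂ) + c • R')) :
    ((R * (z • (1:Matrix n n ℂ) + c • R')⁻¹).trace).re ≤ z⁻¹ * (R.trace).re := by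
  have hpsd := shifted_inv_psd hR' hz hc hU
  have h0 := trace_mul_re_nonneg hR hpsd
  have hexp : R * (z⁻¹ • (1:Matrix n n ℂ) - (z • (1:Matrix n n ℂ) + c • R')⁻¹)
      = z⁻¹ • R - R * (z • (1:Matrix n n ℂ) + c • R')⁻¹ := by
    rw [Matrix.mul_sub, mul_smul_comm, mul_one]
  rw [hexp, Matrix.trace_sub, Matrix.trace_smul] at h0
  have : ((z⁻¹ • R.trace : ℂ)).re = z⁻¹ * (R.trace).re := by
    rw [Complex.real_smul, Complex.re_ofReal_mul]
  simp only [Complex.sub_re, this] at h0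
  linarith


lemma quad_bound {T R2 : Matrix n n ℂ} (hT : T.PosSemidef) (hR2 : R2.PosSemidef)
    {r a c : ℝ} (hr : 0 < r) (hTr : ‖T‖ ≤ r) (hR2r : ‖R2‖ ≤ r) (ha : 0 ≤ a) (hc : 0 ≤ c)
    (u w v : n → ℂ) (hw : w = T *ᵥ u) (hv : v = a • w + c • (R2 *ᵥ w)) :
    (star (u + v) ⬝ᵥ T *ᵥ (u + v)).re
      ≤ (1 + (a + c * r) * r)^2 * (star u ⬝ᵥ T *ᵥ u).re := by
  have hq0 : 0 ≤ (star u ⬝ᵥ T *ᵥ u).re := hT.re_dotProduct_nonneg u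
  have hsymm : star u ⬝ᵥ T *ᵥ v = star w ⬝ᵥ v := by
    rw [Matrix.dotProduct_mulVec, hw, star_mulVec, hT.1.eq]
  have hipexp : (star (u + v) ⬝ᵥ T *ᵥ (u + v)).re
      = (star u ⬝ᵥ T *ᵥ u).re + 2 * (star w ⬝ᵥ v).re + (star v ⬝ᵥ T *ᵥ v).re := by
    rw [Matrix.mulVec_add, star_add, add_dotProduct, dotProduct_add, dotProduct_add]
    simp only [Complex.add_re]
    have h1 : (star u ⬝ᵥ T *ᵥ v).re = (star w ⬝ᵥ v).re := by rw [hsymm]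
    have h3 : (star v ⬝ᵥ T *ᵥ u).re = (star w ⬝ᵥ v).re := by
      rw [← hw]; exact re_conj_dot v w
    rw [h1, h3]; ring
  set q := (star u ⬝ᵥ T *ᵥ u).re with hq
  set nw := ‖(WithLp.equiv 2 (n → ℂ)).symm w‖ with hnwdef
  set nv := ‖(WithLp.equiv 2 (n → ℂ)).symm v‖ with hnvdef
  have hnw0 : 0 ≤ nw := norm_nonneg _
  have hnv0 : 0 ≤ nv := norm_nonneg _
  have hnw2 : nw^2 ≤ r * q := by
    have h := normsq_mulVec_le hT u
    have h' : ‖(WithLp.equiv 2 (n → ℂ)).symm w‖^2 ≤ ‖T‖ * q := by rw [hw]; exact h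
    have h'' : ‖T‖ * q ≤ r * q := mul_le_mul_of_nonneg_right hTr hq0
    exact le_trans h' h''
  set b := a + c * r with hbdef
  have hb0 : 0 ≤ b := add_nonneg ha (mul_nonneg hc hr.le)
  have hnv : nv ≤ b * nw := by
    have hveq : (WithLp.equiv 2 (n → ℂ)).symm v
        = a • (WithLp.equiv 2 (n → ℂ)).symm w
          + c • (WithLp.equiv 2 (n → ℂ)).symm (R2 *ᵥ w) := by rw [hv]; rfl
    have hR2w : ‖(WithLp.equiv 2 (n → ℂ)).symm (R2 *ᵥ w)‖ ≤ r * nw := by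
      refine le_trans (R2.l2_opNorm_mulVec _) ?_
      exact mul_le_mul_of_nonneg_right hR2r hnw0
    calc nv = ‖a • (WithLp.equiv 2 (n → ℂ)).symm w
          + c • (WithLp.equiv 2 (n → ℂ)).symm (R2 *ᵥ w)‖ := by rw [hnvdef, hveq]
      _ ≤ ‖a • (WithLp.equiv 2 (n → ℂ)).symm w‖
          + ‖c • (WithLp.equiv 2 (n → ℂ)).symm (R2 *ᵥ w)‖ := norm_add_le _ _
      _ = a * nw + c * ‖(WithLp.equiv 2 (n → ℂ)).symm (R2 *ᵥ w)‖ := by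
          rw [norm_smul, norm_smul, Real.norm_of_nonneg ha, Real.norm_of_nonneg hc, hnwdef]
      _ ≤ a * nw + c * (r * nw) := by
          have := mul_le_mul_of_nonneg_left hR2w hc
          linarith
      _ = b * nw := by rw [hbdef]; ring
  have hwv : (star w ⬝ᵥ v).re ≤ nw * nv := by
    have h1 : (star w ⬝ᵥ v) = (inner ℂ ((WithLp.equiv 2 (n → ℂ)).symm w)
        ((WithLp.equiv 2 (n → ℂ)).symm v) : ℂ) := dot_eq_inner _ _
    rw [h1]
    exact re_inner_le_norm (𝕜 := ℂ) ((WithLp.equiv 2 (n → ℂ)).symm w) ((WithLp.equiv 2 (n → ℂ)).symm v)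
  have hvv : (star v ⬝ᵥ T *ᵥ v).re ≤ r * nv^2 := by
    have h1 := re_ip_le T v
    rw [nsq_eq_norm] at h1
    refine le_trans h1 ?_
    exact mul_le_mul_of_nonneg_right hTr (by positivity)
  have hwv2 : (star w ⬝ᵥ v).re ≤ b * (r * q) := by
    have h1 : nw * nv ≤ nw * (b * nw) := mul_le_mul_of_nonneg_left hnv hnw0
    have h3 : b * nw^2 ≤ b * (r * q) := mul_le_mul_of_nonneg_left hnw2 hb0
    nlinarith [hwv]
  have hvv2 : (star v ⬝ᵥ T *ᵥ v).re ≤ r * (b^2 * (r * q)) := by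
    have h1 : nv^2 ≤ (b * nw)^2 := pow_le_pow_left₀ hnv0 hnv 2
    have h3 : b^2 * nw^2 ≤ b^2 * (r * q) := mul_le_mul_of_nonneg_left hnw2 (sq_nonneg b)
    have h4 : nv^2 ≤ b^2 * (r * q) := by nlinarith
    exact le_trans hvv (mul_le_mul_of_nonneg_left h4 hr.le)
  rw [hipexp]
  nlinarith [hwv2, hvv2, hq0, sq_nonneg (b * r), mul_nonneg (mul_nonneg hb0 hr.le) hq0]

end SysIAux
noncomputable section

/-- A quadruple of reals `(δ, ωb, ωu, γ)` is a solution of system (I) at parameters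
`(sbar, z)`: the four fixed-point equations hold and all inverted matrices are invertible. -/
def IsSolutionSystemI (N L M : ℕ)
    (R1 : Matrix (Fin N) (Fin N) ℂ) (T1 R2 : Matrix (Fin L) (Fin L) ℂ)
    (T2 : Matrix (Fin M) (Fin M) ℂ) (sbar z δ ωb ωu γ : ℝ) : Prop :=
  IsUnit (z • (1 : Matrix (Fin N) (Fin N) ℂ) + (sbar * ωb + γ * ωu) • R1) ∧
  IsUnit ((1 : Matrix (Fin L) (Fin L) ℂ) + (sbar * δ) • T1 + (δ * γ) • (R2 * T1)) ∧
  IsUnit ((1 : Matrix (Fin M) (Fin M) ℂ) + ((L / M : ℝ) * δ * ωu) • T2) ∧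
  (δ : ℂ) = (L : ℂ)⁻¹ *
    (R1 * (z • (1 : Matrix (Fin N) (Fin N) ℂ) + (sbar * ωb + γ * ωu) • R1)⁻¹).trace ∧
  (ωb : ℂ) = (L : ℂ)⁻¹ *
    (T1 * ((1 : Matrix (Fin L) (Fin L) ℂ) + (sbar * δ) • T1 + (δ * γ) • (R2 * T1))⁻¹).trace ∧
  (ωu : ℂ) = (L : ℂ)⁻¹ *
    (R2 * T1 * ((1 : Matrix (Fin L) (Fin L) ℂ) + (sbar * δ) • T1 + (δ * γ) • (R2 * T1))⁻¹).trace ∧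
  (γ : ℂ) = (M : ℂ)⁻¹ *
    (T2 * ((1 : Matrix (Fin M) (Fin M) ℂ) + ((L / M : ℝ) * δ * ωu) • T2)⁻¹).trace

set_option maxHeartbeats 1000000 in
theorem systemI_omegau2I_lower_bound
    (N L M : ℕ) (hN : 0 < N) (hL : 0 < L) (hM : 0 < M)
    (R1 : Matrix (Fin N) (Fin N) ℂ) (T1 R2 : Matrix (Fin L) (Fin L) ℂ)
    (T2 : Matrix (Fin M) (Fin M) ℂ)
    (hR1 : R1.PosSemidef) (hT1 : T1.PosSemidef) (hR2 : R2.PosSemidef) (hT2 : T2.PosSemidef)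
    (r l : ℝ) (hr : 0 < r) (hl : 0 < l)
    (hR1r : ‖R1‖ ≤ r) (hT1r : ‖T1‖ ≤ r) (hR2r : ‖R2‖ ≤ r) (hT2r : ‖T2‖ ≤ r)
    (hl1 : l ≤ (1 / L : ℝ) * ((R2 * T1).trace).re)
    (hl2 : l ≤ (1 / N : ℝ) * (R1.trace).re)
    (hl3 : l ≤ (1 / L : ℝ) * (R2.trace).re)
    (hl4 : l ≤ (1 / L : ℝ) * (T1.trace).re)
    (hl5 : l ≤ (1 / M : ℝ) * (T2.trace).re)
    (sbar z : ℝ) (hs : 0 ≤ sbar) (hz : 0 < z)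
    (δ ωb ωu γ : ℝ) (hδ : 0 < δ) (hωb : 0 < ωb) (hωu : 0 < ωu) (hγ : 0 < γ)
    (hsol : IsSolutionSystemI N L M R1 T1 R2 T2 sbar z δ ωb ωu γ)
    (Fd : Matrix (Fin N) (Fin N) ℂ)
    (hFd : Fd = (z • (1 : Matrix (Fin N) (Fin N) ℂ) + (sbar * ωb + γ * ωu) • R1)⁻¹)
    (Fo : Matrix (Fin L) (Fin L) ℂ)
    (hFo : Fo = ((1 : Matrix (Fin L) (Fin L) ℂ) + (sbar * δ) • T1 + (δ * γ) • (R2 * T1))⁻¹)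
    (Fg : Matrix (Fin M) (Fin M) ℂ)
    (hFg : Fg = ((1 : Matrix (Fin M) (Fin M) ℂ) + ((L / M : ℝ) * δ * ωu) • T2)⁻¹)
    (δ₂ δ₂I ωb₂ ωu₂ ωu₂I κ γ₂ ς Δ ΔV1 : ℝ)
    (hδ₂ : δ₂ = (1 / L : ℝ) * (((R1 * Fd) * (R1 * Fd)).trace).re)
    (hδ₂I : δ₂I = (1 / L : ℝ) * ((R1 * (Fd * Fd)).trace).re)
    (hωb₂ : ωb₂ = (1 / L : ℝ) * (((T1 * Fo) * (T1 * Fo)).trace).re)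
    (hωu₂ : ωu₂ = (1 / L : ℝ) * (((R2 * T1 * Fo) * (R2 * T1 * Fo)).trace).re)
    (hωu₂I : ωu₂I = (1 / L : ℝ) * ((R2 * T1 * (Fo * Fo)).trace).re)
    (hκ : κ = (1 / L : ℝ) * ((T1 * Fo * (R2 * T1) * Fo).trace).re)
    (hγ₂ : γ₂ = (1 / M : ℝ) * (((T2 * Fg) * (T2 * Fg)).trace).re)
    (hς : ς = 2 * sbar * γ * κ + γ ^ 2 * ωu₂ + sbar ^ 2 * ωb₂)
    (hΔ : Δ = 1 - (L / M : ℝ) * γ₂ * ωu₂ * δ ^ 2)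
    (hΔV1 : ΔV1 = (1 - ς * δ₂) * Δ - (L / M : ℝ) * γ₂ * ωu₂I ^ 2 * δ₂)
    :
    l / (1 + (N : ℝ) * (sbar * r ^ 2 + r ^ 4) / (L * z)) ^ 2 ≤ ωu₂I := by
  obtain ⟨hU1, hU2, hU3, hδe, hωbe, hωue, hγe⟩ := hsol
  set K0 : ℝ := 1 + (N : ℝ) * (sbar * r ^ 2 + r ^ 4) / (L * z) with hK0
  have hLpos : (0:ℝ) < L := by exact_mod_cast hL
  have hNpos : (0:ℝ) < N := by exact_mod_cast hN
  have hMpos : (0:ℝ) < M := by exact_mod_cast hM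
  have hK0ge1 : 1 ≤ K0 := by
    have h1 : 0 ≤ sbar * r ^ 2 + r ^ 4 :=
      add_nonneg (mul_nonneg hs (sq_nonneg r)) (by positivity)
    have h2 : 0 ≤ (N:ℝ) * (sbar * r ^ 2 + r ^ 4) / (L * z) :=
      div_nonneg (mul_nonneg hNpos.le h1) (by positivity)
    rw [hK0]
    linarith only [h2]
  have hK0pos : 0 < K0 := lt_of_lt_of_le one_pos hK0ge1
  -- Step A : δ ≤ N r / (L z)
  have hδeq : δ = (L:ℝ)⁻¹ * ((R1 * Fd).trace).re := by
    rw [hFd]; exact SysIAux.real_eq_of_complex hδe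
  have hδle : δ ≤ (N:ℝ) * r / (L * z) := by
    have hcnn : 0 ≤ sbar * ωb + γ * ωu :=
      add_nonneg (mul_nonneg hs hωb.le) (mul_nonneg hγ.le hωu.le)
    have htr := SysIAux.trace_inv_bound hR1 hR1 hz hcnn hU1
    have htr2 : (R1.trace).re ≤ N * r := by
      simpa [Fintype.card_fin] using SysIAux.trace_re_le_card hR1 r hR1r
    have hzi : (0:ℝ) ≤ z⁻¹ := (inv_pos.mpr hz).le
    have h3 : ((R1 * (z • (1 : Matrix (Fin N) (Fin N) ℂ)
        + (sbar * ωb + γ * ωu) • R1)⁻¹).trace).re ≤ z⁻¹ * (N * r) :=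
      le_trans htr (mul_le_mul_of_nonneg_left htr2 hzi)
    rw [hδeq, hFd]
    calc (L:ℝ)⁻¹ * ((R1 * (z • (1 : Matrix (Fin N) (Fin N) ℂ)
          + (sbar * ωb + γ * ωu) • R1)⁻¹).trace).re
        ≤ (L:ℝ)⁻¹ * (z⁻¹ * (N * r)) :=
          mul_le_mul_of_nonneg_left h3 (inv_pos.mpr hLpos).le
      _ = (N:ℝ) * r / (L * z) := by field_simp
  -- Step B : γ ≤ r
  have hγeq : γ = (M:ℝ)⁻¹ * ((T2 * Fg).trace).re := by
    rw [hFg]; exact SysIAux.real_eq_of_complex hγe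
  have hγle : γ ≤ r := by
    have hc' : 0 ≤ (L/M:ℝ) * δ * ωu :=
      mul_nonneg (mul_nonneg (div_nonneg hLpos.le hMpos.le) hδ.le) hωu.le
    have hU3' : IsUnit ((1:ℝ) • (1 : Matrix (Fin M) (Fin M) ℂ)
        + ((L/M:ℝ) * δ * ωu) • T2) := by rwa [one_smul]
    have htr := SysIAux.trace_inv_bound hT2 hT2 one_pos hc' hU3'
    rw [one_smul, inv_one, one_mul] at htr
    have htr2 : (T2.trace).re ≤ M * r := by
      simpa [Fintype.card_fin] using SysIAux.trace_re_le_card hT2 r hT2r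
    have h3 : ((T2 * ((1 : Matrix (Fin M) (Fin M) ℂ)
        + ((L/M:ℝ) * δ * ωu) • T2)⁻¹).trace).re ≤ M * r := le_trans htr htr2
    rw [hγeq, hFg]
    calc (M:ℝ)⁻¹ * ((T2 * ((1 : Matrix (Fin M) (Fin M) ℂ)
          + ((L/M:ℝ) * δ * ωu) • T2)⁻¹).trace).re
        ≤ (M:ℝ)⁻¹ * (M * r) := mul_le_mul_of_nonneg_left h3 (inv_pos.mpr hMpos).le
      _ = r := by field_simp
  -- Step C
  set B := (1 : Matrix (Fin L) (Fin L) ℂ) + (sbar * δ) • T1 + (δ * γ) • (R2 * T1) with hB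
  have hdetB := B.isUnit_iff_isUnit_det.mp hU2
  have hBFo : B * Fo = 1 := by rw [hFo]; exact B.mul_nonsing_inv hdetB
  have hBH : Bᴴ = (1 : Matrix (Fin L) (Fin L) ℂ) + (sbar * δ) • T1 + (δ * γ) • (T1 * R2) := by
    rw [hB, conjTranspose_add, conjTranspose_add, conjTranspose_one, conjTranspose_smul,
      conjTranspose_smul, conjTranspose_mul, hT1.1.eq, hR2.1.eq]
    simp
  have hBstar : Bᴴ * T1 = T1 * B := by
    rw [hBH, hB]
    simp only [Matrix.add_mul, Matrix.mul_add, Matrix.one_mul, Matrix.mul_one,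
      Matrix.smul_mul, Matrix.mul_smul, Matrix.mul_assoc]
  have hT1Fo : T1 * Fo = Foᴴ * T1 := by
    have e1 : Foᴴ * Bᴴ = 1 := by rw [← conjTranspose_mul, hBFo, conjTranspose_one]
    calc T1 * Fo = 1 * (T1 * Fo) := (Matrix.one_mul _).symm
      _ = (Foᴴ * Bᴴ) * (T1 * Fo) := by rw [e1]
      _ = Foᴴ * ((Bᴴ * T1) * Fo) := by simp only [Matrix.mul_assoc]
      _ = Foᴴ * ((T1 * B) * Fo) := by rw [hBstar]
      _ = Foᴴ * (T1 * (B * Fo)) := by simp only [Matrix.mul_assoc]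
      _ = Foᴴ * T1 := by rw [hBFo, Matrix.mul_one]
  set X := Foᴴ * T1 * Fo with hX
  have hXpsd : X.PosSemidef := hT1.conjTranspose_mul_mul_same Fo
  have hR2X : R2 * T1 * (Fo * Fo) = R2 * X := by
    calc R2 * T1 * (Fo * Fo) = R2 * ((T1 * Fo) * Fo) := by simp only [Matrix.mul_assoc]
      _ = R2 * ((Foᴴ * T1) * Fo) := by rw [hT1Fo]
      _ = R2 * X := by rw [hX, Matrix.mul_assoc]
  -- bound on the perturbation size
  have ha_bound : (sbar * δ + δ * γ * r) * r ≤ K0 - 1 := by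
    have h1 : (sbar * δ + δ * γ * r) * r ≤ δ * (sbar * r + r^3) := by
      have hgd : δ * γ ≤ δ * r := mul_le_mul_of_nonneg_left hγle hδ.le
      have hgd2 : (δ * γ) * (r * r) ≤ (δ * r) * (r * r) :=
        mul_le_mul_of_nonneg_right hgd (by positivity)
      nlinarith only [hgd2]
    have h2 : δ * (sbar * r + r^3) ≤ ((N:ℝ) * r / (L * z)) * (sbar * r + r^3) := by
      have hnn : 0 ≤ sbar * r + r^3 := by positivity
      exact mul_le_mul_of_nonneg_right hδle hnn
    have h3 : ((N:ℝ) * r / (L * z)) * (sbar * r + r^3) = K0 - 1 := by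
      rw [hK0]; field_simp; ring
    exact h1.trans (h2.trans h3.le)
  -- Loewner-type quadratic form inequality
  have hquad : ∀ x : Fin L → ℂ,
      (star x ⬝ᵥ T1 *ᵥ x).re ≤ K0^2 * (star x ⬝ᵥ X *ᵥ x).re := by
    intro x
    have hXx : star x ⬝ᵥ X *ᵥ x = star (Fo *ᵥ x) ⬝ᵥ T1 *ᵥ (Fo *ᵥ x) := by
      rw [hX, ← Matrix.mulVec_mulVec, ← Matrix.mulVec_mulVec, Matrix.dotProduct_mulVec]
      conv_rhs => rw [star_mulVec]
    have hxB : x = B *ᵥ (Fo *ᵥ x) := by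
      rw [Matrix.mulVec_mulVec, hBFo, Matrix.one_mulVec]
    have hBu : ∀ u : Fin L → ℂ, B *ᵥ u
        = u + ((sbar * δ) • (T1 *ᵥ u) + (δ * γ) • (R2 *ᵥ (T1 *ᵥ u))) := by
      intro u
      rw [hB, Matrix.add_mulVec, Matrix.add_mulVec, Matrix.one_mulVec,
        Matrix.smul_mulVec, Matrix.smul_mulVec, ← Matrix.mulVec_mulVec]
      abel
    have hkey := SysIAux.quad_bound hT1 hR2 hr hT1r hR2r
      (mul_nonneg hs hδ.le) (mul_nonneg hδ.le hγ.le) (Fo *ᵥ x)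
      (T1 *ᵥ (Fo *ᵥ x)) _ rfl rfl
    have hq0 : 0 ≤ (star (Fo *ᵥ x) ⬝ᵥ T1 *ᵥ (Fo *ᵥ x)).re :=
      hT1.re_dotProduct_nonneg (Fo *ᵥ x)
    have hfac : (1 + (sbar * δ + δ * γ * r) * r)^2 ≤ K0^2 := by
      have h1 : 0 ≤ 1 + (sbar * δ + δ * γ * r) * r := by
        have : 0 ≤ (sbar * δ + δ * γ * r) * r := mul_nonneg
          (add_nonneg (mul_nonneg hs hδ.le) (mul_nonneg (mul_nonneg hδ.le hγ.le) hr.le)) hr.le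
        linarith only [this]
      have h2 : 1 + (sbar * δ + δ * γ * r) * r ≤ K0 := by linarith only [ha_bound]
      exact pow_le_pow_left₀ h1 h2 2
    rw [hXx]
    conv_lhs => rw [hxB, hBu (Fo *ᵥ x)]
    refine le_trans hkey ?_
    exact mul_le_mul_of_nonneg_right hfac hq0
  -- trace comparison
  have hHherm : ((K0^2) • X - T1).IsHermitian := by
    unfold Matrix.IsHermitian
    rw [conjTranspose_sub, conjTranspose_smul, hXpsd.1.eq, hT1.1.eq]
    simp
  have hHpsd : ((K0^2) • X - T1).PosSemidef := by
    refine SysIAux.posSemidef_of_re hHherm (fun x => ?_)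
    have hexp : ((K0^2) • X - T1) *ᵥ x = (K0^2) • (X *ᵥ x) - T1 *ᵥ x := by
      rw [Matrix.sub_mulVec, Matrix.smul_mulVec]
    rw [hexp, dotProduct_sub, dotProduct_smul]
    simp only [Complex.sub_re, Complex.real_smul, Complex.re_ofReal_mul]
    linarith only [hquad x]
  have h0 := SysIAux.trace_mul_re_nonneg hR2 hHpsd
  have hexp2 : R2 * ((K0^2) • X - T1) = (K0^2) • (R2 * X) - R2 * T1 := by
    rw [Matrix.mul_sub, mul_smul_comm]
  rw [hexp2, Matrix.trace_sub, Matrix.trace_smul] at h0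
  simp only [Complex.sub_re, Complex.real_smul, Complex.re_ofReal_mul] at h0
  -- conclusion
  have hωu2Ival : ωu₂I = (1/(L:ℝ)) * ((R2 * X).trace).re := by rw [hωu₂I, hR2X]
  rw [div_le_iff₀ (by positivity : (0:ℝ) < K0^2), hωu2Ival]
  have hstep : ((R2 * T1).trace).re ≤ K0^2 * ((R2 * X).trace).re := by linarith only [h0]
  have h4 : l ≤ (1/(L:ℝ)) * (K0^2 * ((R2 * X).trace).re) := by
    refine le_trans hl1 ?_
    exact mul_le_mul_of_nonneg_left hstep (by positivity)
  nlinarith only [h4]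
end
end

section
/- Let (τ, τ̄) be a positive solution of system (II) at parameters s̲ ≥ 0 and z > 0. Then Δ_V2 ≥ l·z²/(r·(s̲·r² + z)²); in particular Δ_V2 > 0. -/
set_option maxHeartbeats 4000000
open Matrix
open scoped Matrix.Norms.L2Operator ComplexOrder
noncomputable section

lemma eig_le_norm {n : ℕ} (A : Matrix (Fin n) (Fin n) ℂ) (hA : A.IsHermitian) (i : Fin n) :
    hA.eigenvalues i ≤ ‖A‖ := by
  have hv : ‖hA.eigenvectorBasis i‖ = 1 := hA.eigenvectorBasis.orthonormal.1 i
  have h := A.l2_opNorm_mulVec (hA.eigenvectorBasis i)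
  have heq : A *ᵥ (hA.eigenvectorBasis i : EuclideanSpace ℂ (Fin n))
      = hA.eigenvalues i • (hA.eigenvectorBasis i : EuclideanSpace ℂ (Fin n)) :=
    hA.mulVec_eigenvectorBasis i
  rw [heq] at h
  have hsm : (EuclideanSpace.equiv (Fin n) ℂ).symm
        (hA.eigenvalues i • (hA.eigenvectorBasis i : EuclideanSpace ℂ (Fin n)))
      = hA.eigenvalues i • hA.eigenvectorBasis i := rfl
  rw [hsm, norm_smul, hv, mul_one, mul_one] at h
  exact le_trans (le_abs_self _) h

lemma resolvent_traces {n : ℕ} (A : Matrix (Fin n) (Fin n) ℂ) (hA : A.PosSemidef)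
    (z c : ℝ) (hz : 0 < z) (hc : 0 ≤ c) :
    ∃ μ : Fin n → ℝ, (∀ i, 0 ≤ μ i) ∧ (∀ i, μ i ≤ ‖A‖) ∧
      A.trace = ((∑ i, μ i : ℝ) : ℂ) ∧
      (A * (z • (1 : Matrix (Fin n) (Fin n) ℂ) + c • A)⁻¹).trace
        = ((∑ i, μ i / (z + c * μ i) : ℝ) : ℂ) ∧
      ((A * (z • (1 : Matrix (Fin n) (Fin n) ℂ) + c • A)⁻¹)
          * (A * (z • (1 : Matrix (Fin n) (Fin n) ℂ) + c • A)⁻¹)).trace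
        = ((∑ i, (μ i / (z + c * μ i)) ^ 2 : ℝ) : ℂ) := by
  classical
  have hH := hA.1
  set μ : Fin n → ℝ := hH.eigenvalues with hμ
  have hden : ∀ i, (0:ℝ) < z + c * μ i := fun i =>
    add_pos_of_pos_of_nonneg hz (mul_nonneg hc (hA.eigenvalues_nonneg i))
  set U : Matrix (Fin n) (Fin n) ℂ := (hH.eigenvectorUnitary : Matrix (Fin n) (Fin n) ℂ) with hU
  have hU1 : U * star U = 1 := (Matrix.mem_unitaryGroup_iff).mp hH.eigenvectorUnitary.2
  have hU2 : star U * U = 1 := (Matrix.mem_unitaryGroup_iff').mp hH.eigenvectorUnitary.2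
  set D : Matrix (Fin n) (Fin n) ℂ := diagonal (fun i => (μ i : ℂ)) with hD
  have hspec : A = U * D * star U := hH.spectral_theorem
  have htr : ∀ X : Matrix (Fin n) (Fin n) ℂ, (U * X * star U).trace = X.trace := by
    intro X
    rw [Matrix.trace_mul_comm, ← Matrix.mul_assoc, hU2, Matrix.one_mul]
  have hconj : ∀ X Y : Matrix (Fin n) (Fin n) ℂ,
      (U * X * star U) * (U * Y * star U) = U * (X * Y) * star U := by
    intro X Y
    simp only [Matrix.mul_assoc]
    rw [show star U * (U * (Y * star U)) = Y * star U by
      rw [← Matrix.mul_assoc, hU2, Matrix.one_mul]]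
  have hsum : z • (1 : Matrix (Fin n) (Fin n) ℂ) + c • A
      = U * diagonal (fun i => ((z + c * μ i : ℝ) : ℂ)) * star U := by
    have h1 : diagonal (fun i => ((z + c * μ i : ℝ) : ℂ)) = z • (1 : Matrix (Fin n) (Fin n) ℂ) + c • D := by
      rw [hD]
      ext i j
      by_cases hij : i = j
      · subst hij
        simp only [Matrix.diagonal_apply_eq, Matrix.add_apply, Matrix.smul_apply,
          Matrix.one_apply_eq, Complex.real_smul, smul_eq_mul]
        push_cast
        ring
      · simp [Matrix.diagonal_apply_ne _ hij, Matrix.one_apply_ne hij]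
    rw [h1, hspec]
    simp only [Matrix.mul_add, Matrix.add_mul, Matrix.mul_smul, Matrix.smul_mul, Matrix.mul_one,
      hU1]
  set Di : Matrix (Fin n) (Fin n) ℂ := diagonal (fun i => (((z + c * μ i : ℝ) : ℂ))⁻¹) with hDi
  have hdiagmul : diagonal (fun i => ((z + c * μ i : ℝ) : ℂ)) * Di = 1 := by
    rw [hDi, Matrix.diagonal_mul_diagonal]
    rw [show (fun i => ((z + c * μ i : ℝ) : ℂ) * (((z + c * μ i : ℝ) : ℂ))⁻¹) = fun _ => (1:ℂ) by
      funext i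
      exact mul_inv_cancel₀ (by exact_mod_cast (hden i).ne')]
    exact Matrix.diagonal_one
  have hinv : (z • (1 : Matrix (Fin n) (Fin n) ℂ) + c • A)⁻¹ = U * Di * star U := by
    rw [hsum]
    have hUi : U⁻¹ = star U := Matrix.inv_eq_right_inv hU1
    have hUsi : (star U)⁻¹ = U := Matrix.inv_eq_right_inv hU2
    have hDinv : (diagonal (fun i => ((z + c * μ i : ℝ) : ℂ)))⁻¹ = Di :=
      Matrix.inv_eq_right_inv hdiagmul
    rw [Matrix.mul_inv_rev, Matrix.mul_inv_rev, hUi, hUsi, hDinv, Matrix.mul_assoc]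
  have hAG : A * (z • (1 : Matrix (Fin n) (Fin n) ℂ) + c • A)⁻¹
      = U * diagonal (fun i => ((μ i / (z + c * μ i) : ℝ) : ℂ)) * star U := by
    rw [hinv]
    conv_lhs => rw [hspec]
    rw [hconj, hDi, hD, Matrix.diagonal_mul_diagonal]
    rw [show (fun i => (μ i : ℂ) * (((z + c * μ i : ℝ) : ℂ))⁻¹)
        = fun i => ((μ i / (z + c * μ i) : ℝ) : ℂ) by
      funext i; rw [div_eq_mul_inv]; push_cast; ring]
  refine ⟨μ, fun i => hA.eigenvalues_nonneg i, fun i => eig_le_norm A hH i, ?_, ?_, ?_⟩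
  · rw [hspec, htr, hD, Matrix.trace_diagonal]
    push_cast
    ring
  · rw [hAG, htr, Matrix.trace_diagonal]
    push_cast
    ring
  · rw [hAG, hconj, htr, Matrix.diagonal_mul_diagonal, Matrix.trace_diagonal]
    push_cast
    exact Finset.sum_congr rfl (fun i _ => by ring)

/-- A pair of reals `(τ, τb)` is a solution of system (II) at parameters `(sund, z)`. -/
def IsSolutionSystemII (N L : ℕ)
    (R1 : Matrix (Fin N) (Fin N) ℂ) (T1 : Matrix (Fin L) (Fin L) ℂ)
    (sund z τ τb : ℝ) : Prop :=
  (τ : ℂ) = (L : ℂ)⁻¹ *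
    (R1 * (z • (1 : Matrix (Fin N) (Fin N) ℂ) + (sund * τb) • R1)⁻¹).trace ∧
  (τb : ℂ) = (L : ℂ)⁻¹ *
    (T1 * ((1 : Matrix (Fin L) (Fin L) ℂ) + (sund * τ) • T1)⁻¹).trace

theorem systemII_DeltaV2_lower_bound
    (N L M : ℕ) (hN : 0 < N) (hL : 0 < L) (hM : 0 < M)
    (R1 : Matrix (Fin N) (Fin N) ℂ) (T1 R2 : Matrix (Fin L) (Fin L) ℂ)
    (T2 : Matrix (Fin M) (Fin M) ℂ)
    (hR1 : R1.PosSemidef) (hT1 : T1.PosSemidef) (hR2 : R2.PosSemidef) (hT2 : T2.PosSemidef)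
    (r l : ℝ) (hr : 0 < r) (hl : 0 < l)
    (hR1r : ‖R1‖ ≤ r) (hT1r : ‖T1‖ ≤ r) (hR2r : ‖R2‖ ≤ r) (hT2r : ‖T2‖ ≤ r)
    (hl1 : l ≤ (1 / L : ℝ) * ((R2 * T1).trace).re)
    (hl2 : l ≤ (1 / N : ℝ) * (R1.trace).re)
    (hl3 : l ≤ (1 / L : ℝ) * (R2.trace).re)
    (hl4 : l ≤ (1 / L : ℝ) * (T1.trace).re)
    (hl5 : l ≤ (1 / M : ℝ) * (T2.trace).re)
    (sund z : ℝ) (hsund : 0 ≤ sund) (hz : 0 < z)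
    (τ τb : ℝ) (hτ : 0 < τ) (hτb : 0 < τb)
    (hsol : IsSolutionSystemII N L R1 T1 sund z τ τb)
    (Gt : Matrix (Fin N) (Fin N) ℂ)
    (hGt : Gt = (z • (1 : Matrix (Fin N) (Fin N) ℂ) + (sund * τb) • R1)⁻¹)
    (Gtb : Matrix (Fin L) (Fin L) ℂ)
    (hGtb : Gtb = ((1 : Matrix (Fin L) (Fin L) ℂ) + (sund * τ) • T1)⁻¹)
    (τ₂ τb₂ ΔV2 : ℝ)
    (hτ₂ : τ₂ = (1 / L : ℝ) * (((R1 * Gt) * (R1 * Gt)).trace).re)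
    (hτb₂ : τb₂ = (1 / L : ℝ) * (((T1 * Gtb) * (T1 * Gtb)).trace).re)
    (hΔV2 : ΔV2 = 1 - sund ^ 2 * τ₂ * τb₂) :
    l * z ^ 2 / (r * (sund * r ^ 2 + z) ^ 2) ≤ ΔV2 ∧ 0 < ΔV2 := by
  have hL' : (0:ℝ) < L := by exact_mod_cast hL
  have hN' : (0:ℝ) < N := by exact_mod_cast hN
  -- diagonalize R1
  obtain ⟨x, hx0, hxn, hxtr, hxres, hxres2⟩ :=
    resolvent_traces R1 hR1 z (sund * τb) hz (mul_nonneg hsund hτb.le)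
  -- diagonalize T1
  obtain ⟨y, hy0, hyn, hytr, hyres, hyres2⟩ :=
    resolvent_traces T1 hT1 1 (sund * τ) one_pos (mul_nonneg hsund hτ.le)
  have hxr : ∀ i, x i ≤ r := fun i => le_trans (hxn i) hR1r
  have hyr : ∀ j, y j ≤ r := fun j => le_trans (hyn j) hT1r
  have hone : ((1 : Matrix (Fin L) (Fin L) ℂ) + (sund * τ) • T1)
      = ((1:ℝ) • (1 : Matrix (Fin L) (Fin L) ℂ) + (sund * τ) • T1) := by rw [one_smul]
  -- eigenvalue expressions
  set a : Fin N → ℝ := fun i => x i / (z + sund * τb * x i) with ha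
  set b : Fin L → ℝ := fun j => y j / (1 + sund * τ * y j) with hb
  have hdax : ∀ i, (0:ℝ) < z + sund * τb * x i := fun i =>
    add_pos_of_pos_of_nonneg hz (mul_nonneg (mul_nonneg hsund hτb.le) (hx0 i))
  have hdby : ∀ j, (1:ℝ) ≤ 1 + sund * τ * y j := fun j =>
    le_add_of_nonneg_right (mul_nonneg (mul_nonneg hsund hτ.le) (hy0 j))
  have hdby' : ∀ j, (0:ℝ) < 1 + sund * τ * y j := fun j => lt_of_lt_of_le one_pos (hdby j)
  have ha0 : ∀ i, 0 ≤ a i := fun i => div_nonneg (hx0 i) (hdax i).le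
  have hb0 : ∀ j, 0 ≤ b j := fun j => div_nonneg (hy0 j) (hdby' j).le
  -- real form of the fixed point equations and second moments
  have hτeq : τ = (L:ℝ)⁻¹ * ∑ i, a i := by
    have h := hsol.1
    rw [hxres] at h
    have h2 : ((τ : ℝ) : ℂ) = (((L:ℝ)⁻¹ * ∑ i, a i : ℝ) : ℂ) := by
      rw [h, Complex.ofReal_mul, Complex.ofReal_inv, Complex.ofReal_natCast]
    exact_mod_cast h2
  have hτbeq : τb = (L:ℝ)⁻¹ * ∑ j, b j := by
    have h := hsol.2
    rw [hone, hyres] at h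
    have h2 : ((τb : ℝ) : ℂ) = (((L:ℝ)⁻¹ * ∑ j, b j : ℝ) : ℂ) := by
      rw [h, Complex.ofReal_mul, Complex.ofReal_inv, Complex.ofReal_natCast]
    exact_mod_cast h2
  have hτ₂eq : τ₂ = (L:ℝ)⁻¹ * ∑ i, (a i)^2 := by
    rw [hτ₂, hGt, hxres2, Complex.ofReal_re, one_div]
  have hτb₂eq : τb₂ = (L:ℝ)⁻¹ * ∑ j, (b j)^2 := by
    rw [hτb₂, hGtb, hone, hyres2, Complex.ofReal_re, one_div]
  -- nonnegativity of second moments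
  have hτ₂0 : 0 ≤ τ₂ := by
    rw [hτ₂eq]
    exact mul_nonneg (inv_nonneg.mpr hL'.le) (Finset.sum_nonneg fun i _ => sq_nonneg _)
  have hτb₂0 : 0 ≤ τb₂ := by
    rw [hτb₂eq]
    exact mul_nonneg (inv_nonneg.mpr hL'.le) (Finset.sum_nonneg fun j _ => sq_nonneg _)
  -- inequality (1): (z/r + s τb) τ₂ ≤ τ
  have h1 : (z / r + sund * τb) * τ₂ ≤ τ := by
    rw [hτ₂eq, hτeq, ← mul_assoc, mul_comm (z / r + sund * τb) ((L:ℝ)⁻¹), mul_assoc,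
      Finset.mul_sum]
    refine mul_le_mul_of_nonneg_left (Finset.sum_le_sum fun i _ => ?_)
      (inv_nonneg.mpr hL'.le)
    have hkey : (z / r + sund * τb) * a i ≤ 1 := by
      show (z / r + sund * τb) * (x i / (z + sund * τb * x i)) ≤ 1
      rw [← mul_div_assoc, div_le_one (hdax i)]
      have : z / r * x i ≤ z := by
        have h' := mul_le_mul_of_nonneg_left (hxr i) (div_pos hz hr).le
        rwa [div_mul_cancel₀ z hr.ne'] at h'
      nlinarith [mul_nonneg (mul_nonneg hsund hτb.le) (hx0 i)]
    nlinarith [mul_le_mul_of_nonneg_left hkey (ha0 i), ha0 i]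
  -- inequality (2): (1/r + s τ) τb₂ ≤ τb
  have h2 : (1 / r + sund * τ) * τb₂ ≤ τb := by
    rw [hτb₂eq, hτbeq, ← mul_assoc, mul_comm (1 / r + sund * τ) ((L:ℝ)⁻¹), mul_assoc,
      Finset.mul_sum]
    refine mul_le_mul_of_nonneg_left (Finset.sum_le_sum fun j _ => ?_)
      (inv_nonneg.mpr hL'.le)
    have hkey : (1 / r + sund * τ) * b j ≤ 1 := by
      show (1 / r + sund * τ) * (y j / (1 + sund * τ * y j)) ≤ 1
      rw [← mul_div_assoc, div_le_one (hdby' j)]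
      have : 1 / r * y j ≤ 1 := by
        have h' := mul_le_mul_of_nonneg_left (hyr j) (div_pos one_pos hr).le
        rwa [div_mul_cancel₀ 1 hr.ne'] at h'
      nlinarith [mul_nonneg (mul_nonneg hsund hτ.le) (hy0 j)]
    nlinarith [mul_le_mul_of_nonneg_left hkey (hb0 j), hb0 j]
  -- Cauchy-Schwarz: L τ² ≤ N τ₂
  have h5 : (L:ℝ) * τ^2 ≤ (N:ℝ) * τ₂ := by
    have hcs : (∑ i, a i)^2 ≤ (N:ℝ) * ∑ i, (a i)^2 := by
      have := sq_sum_le_card_mul_sum_sq (s := (Finset.univ : Finset (Fin N))) (f := a)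
      simpa using this
    rw [hτeq, hτ₂eq]
    have hLi : (L:ℝ) * ((L:ℝ)⁻¹ * ∑ i, a i)^2 = (L:ℝ)⁻¹ * (∑ i, a i)^2 := by
      field_simp
    rw [hLi, ← mul_assoc, mul_comm ((N:ℝ)) ((L:ℝ)⁻¹), mul_assoc]
    exact mul_le_mul_of_nonneg_left hcs (inv_nonneg.mpr hL'.le)
  -- τb ≤ r
  have hτbr : τb ≤ r := by
    rw [hτbeq]
    have : ∑ j, b j ≤ (L:ℝ) * r := by
      have := Finset.sum_le_sum (fun j (_ : j ∈ Finset.univ) =>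
        le_trans (div_le_self (hy0 j) (hdby j)) (hyr j))
      simpa [Finset.sum_const, Finset.card_univ] using this
    calc (L:ℝ)⁻¹ * ∑ j, b j ≤ (L:ℝ)⁻¹ * ((L:ℝ) * r) :=
          mul_le_mul_of_nonneg_left this (inv_nonneg.mpr hL'.le)
      _ = r := by field_simp
  -- lower bound on τ : N l ≤ τ L (z + s r²)
  have h6 : (N:ℝ) * l ≤ τ * (L:ℝ) * (z + sund * r^2) := by
    have hxtr' : (R1.trace).re = ∑ i, x i := by rw [hxtr, Complex.ofReal_re]
    have hsx : (N:ℝ) * l ≤ ∑ i, x i := by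
      rw [hxtr'] at hl2
      have := mul_le_mul_of_nonneg_left hl2 hN'.le
      rw [one_div] at this
      calc (N:ℝ) * l ≤ (N:ℝ) * ((N:ℝ)⁻¹ * ∑ i, x i) := this
        _ = ∑ i, x i := by field_simp
    have hzs : (0:ℝ) < z + sund * r^2 :=
      add_pos_of_pos_of_nonneg hz (mul_nonneg hsund (sq_nonneg r))
    have hterm : ∀ i, x i / (z + sund * r^2) ≤ a i := by
      intro i
      show x i / (z + sund * r^2) ≤ x i / (z + sund * τb * x i)
      have hle : z + sund * τb * x i ≤ z + sund * r^2 := by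
        nlinarith [mul_le_mul (mul_le_mul_of_nonneg_left hτbr hsund) (hxr i) (hx0 i)
          (mul_nonneg hsund hr.le)]
      exact div_le_div_of_nonneg_left (hx0 i) (hdax i) hle
    have hsum : (∑ i, x i) / (z + sund * r^2) ≤ ∑ i, a i := by
      rw [Finset.sum_div]
      exact Finset.sum_le_sum fun i _ => hterm i
    have hτL : τ * (L:ℝ) = ∑ i, a i := by
      rw [hτeq]; field_simp
    rw [hτL]
    rw [div_le_iff₀ hzs] at hsum
    calc (N:ℝ) * l ≤ ∑ i, x i := hsx
      _ ≤ (∑ i, a i) * (z + sund * r^2) := hsum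
  -- combine: ΔV2 ≥ z τ₂ / (r τ)
  have e1 : sund * τb * τ₂ ≤ τ - z / r * τ₂ := by nlinarith [h1]
  have e1' : 0 ≤ τ - z / r * τ₂ :=
    le_trans (mul_nonneg (mul_nonneg hsund hτb.le) hτ₂0) e1
  have e2 : sund * τ * τb₂ ≤ τb := by
    have : 0 ≤ 1 / r * τb₂ := mul_nonneg (by positivity) hτb₂0
    nlinarith [h2]
  have hprod : (sund * τb * τ₂) * (sund * τ * τb₂) ≤ (τ - z / r * τ₂) * τb :=
    mul_le_mul e1 e2 (mul_nonneg (mul_nonneg hsund hτ.le) hτb₂0) e1'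
  have hfin : sund ^ 2 * τ₂ * τb₂ * (τ * τb) ≤ (τ - z / r * τ₂) * τb := by
    nlinarith [hprod]
  have key1 : z * τ₂ / (r * τ) ≤ ΔV2 := by
    rw [hΔV2]
    have hττb : (0:ℝ) < τ * τb := mul_pos hτ hτb
    have hdiv : sund ^ 2 * τ₂ * τb₂ ≤ (τ - z / r * τ₂) * τb / (τ * τb) :=
      (le_div_iff₀ hττb).mpr hfin
    have heq : (τ - z / r * τ₂) * τb / (τ * τb) = 1 - z * τ₂ / (r * τ) := by
      field_simp
    rw [heq] at hdiv
    linarith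
  -- final comparison
  have hA : τ * l ≤ τ₂ * (z + sund * r^2) := by
    have hm := mul_le_mul h6 h5 (by positivity) (by positivity)
    have hpos : (0:ℝ) < (N:ℝ) * (L:ℝ) * τ := by positivity
    refine le_of_mul_le_mul_left ?_ hpos
    calc (N:ℝ) * (L:ℝ) * τ * (τ * l) = ((N:ℝ) * l) * ((L:ℝ) * τ^2) := by ring
      _ ≤ (τ * (L:ℝ) * (z + sund * r^2)) * ((N:ℝ) * τ₂) := hm
      _ = (N:ℝ) * (L:ℝ) * τ * (τ₂ * (z + sund * r^2)) := by ring
  have hzs : (0:ℝ) < sund * r^2 + z :=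
    add_pos_of_nonneg_of_pos (mul_nonneg hsund (sq_nonneg r)) hz
  have key2 : l * z ^ 2 / (r * (sund * r ^ 2 + z) ^ 2) ≤ z * τ₂ / (r * τ) := by
    rw [div_le_div_iff₀ (by positivity) (by positivity)]
    have c1 : z * r * (sund * r^2 + z) * (τ * l)
        ≤ z * r * (sund * r^2 + z) * (τ₂ * (z + sund * r^2)) :=
      mul_le_mul_of_nonneg_left hA (by positivity)
    have c2 : l * z^2 * (r * τ) ≤ z * r * (sund * r^2 + z) * (τ * l) := by
      nlinarith [mul_nonneg (mul_nonneg (mul_nonneg hz.le hr.le)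
        (mul_nonneg hsund (sq_nonneg r))) (mul_nonneg hτ.le hl.le)]
    calc l * z ^ 2 * (r * τ) ≤ z * r * (sund * r^2 + z) * (τ₂ * (z + sund * r^2)) :=
          le_trans c2 c1
      _ = z * τ₂ * (r * (sund * r ^ 2 + z) ^ 2) := by ring
  have hmain : l * z ^ 2 / (r * (sund * r ^ 2 + z) ^ 2) ≤ ΔV2 := le_trans key2 key1
  refine ⟨hmain, lt_of_lt_of_le ?_ hmain⟩
  positivity
end
end

section
/- For all real numbers a and b with 0 < a < 1 and 0 < b < 1, one has log(1 − a)·log(1 − b) ≥ (log(1 − √(a·b)))². -/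
/-!
With `L x = -log (1 - x) = ∑ xⁿ⁺¹/(n+1)`, the `n`-th term of `L √(ab)` is the geometric mean
of the `n`-th terms of `L a` and `L b`, so Cauchy–Schwarz for series gives
`(L √(ab))² ≤ L a · L b`.
-/

open Filter

theorem HasSum.sq_le_mul_of_sq_le_mul {ι : Type*} {r f g : ι → ℝ} {A B C : ℝ}
    (hr : HasSum r C) (hf : HasSum f A) (hg : HasSum g B)
    (hf0 : ∀ i, 0 ≤ f i) (hg0 : ∀ i, 0 ≤ g i) (hrfg : ∀ i, r i ^ 2 ≤ f i * g i) :
    C ^ 2 ≤ A * B :=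
  le_of_tendsto_of_tendsto' (hr.pow 2) (Tendsto.mul hf hg) fun s =>
    Finset.sum_sq_le_sum_mul_sum_of_sq_le_mul s (fun i _ => hf0 i) (fun i _ => hg0 i)
      fun i _ => hrfg i

theorem Real.hasSum_pow_div_neg_log_one_sub {x : ℝ} (hx0 : 0 ≤ x) (hx1 : x < 1) :
    HasSum (fun n : ℕ => x ^ (n + 1) / (n + 1)) (-Real.log (1 - x)) :=
  Real.hasSum_pow_div_log_of_abs_lt_one (by rwa [abs_of_nonneg hx0])

/-- For `0 < a < 1` and `0 < b < 1`,
`log(1 − a) · log(1 − b) ≥ (log(1 − √(a·b)))²`. -/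
theorem log_one_sub_mul_log_one_sub_ge
    (a b : ℝ) (ha0 : 0 < a) (ha1 : a < 1) (hb0 : 0 < b) (hb1 : b < 1) :
    (Real.log (1 - Real.sqrt (a * b))) ^ 2 ≤ Real.log (1 - a) * Real.log (1 - b) := by
  have hab : 0 ≤ a * b := by positivity
  have hs1 : Real.sqrt (a * b) < 1 := by
    rw [Real.sqrt_lt' one_pos]
    nlinarith
  have hterm (n : ℕ) : (Real.sqrt (a * b) ^ (n + 1) / (n + 1)) ^ 2 =
      a ^ (n + 1) / (n + 1) * (b ^ (n + 1) / (n + 1)) := by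
    rw [div_pow, ← pow_mul, mul_comm (n + 1) 2, pow_mul, Real.sq_sqrt hab,
      mul_pow, sq, div_mul_div_comm]
  have key := HasSum.sq_le_mul_of_sq_le_mul
    (Real.hasSum_pow_div_neg_log_one_sub (Real.sqrt_nonneg _) hs1)
    (Real.hasSum_pow_div_neg_log_one_sub ha0.le ha1)
    (Real.hasSum_pow_div_neg_log_one_sub hb0.le hb1)
    (fun n => by positivity) (fun n => by positivity) fun n => (hterm n).le
  rwa [neg_sq, neg_mul_neg] at key
end

section
/- Let c1, c2, z be positive reals, let s̄ ≥ 0 and s̲ > 0 be reals, and define the polynomials L_F(m) = c1·c2·m·(c1·z·m + 1 − c1)·(z·m − 1 + s̄·m·(c1·z·m + 1 − c1)) + (s̄ + 1)·m·(c1·z·m + 1 − c1) + z·m − 1 and L_G(m) = s̲·m·(c1·z·m + 1 − c1) + z·m − 1. Then each of the equations L_F(m) = 0 and L_G(m) = 0 has exactly one solution m in the open interval (max(0, (c1 − 1)/(c1·z)), 1/z). -/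
set_option maxHeartbeats 1000000

private lemma ivt_root (a b : ℝ) (f : ℝ → ℝ) (hab : a < b) (hc : Continuous f)
    (ha : f a < 0) (hb : 0 < f b) : ∃ m ∈ Set.Ioo a b, f m = 0 := by
  obtain ⟨m, hm, hfm⟩ := intermediate_value_Ioo hab.le hc.continuousOn
    (Set.mem_Ioo.mpr ⟨ha, hb⟩)
  exact ⟨m, hm, hfm⟩

private lemma prod_one_contra (u1 u2 v1 v2 : ℝ) (hu1 : 0 < u1) (hu : u1 < u2)
    (hv : v1 < v2) (h1 : u1 * v1 = 1) (h2 : u2 * v2 = 1) : False := by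
  have hv1 : 0 < v1 := by nlinarith
  have hu2 : 0 < u2 := lt_trans hu1 hu
  nlinarith [mul_pos (sub_pos.mpr hu) hv1, mul_pos hu2 (sub_pos.mpr hv)]

/-- Each of the equations `L_F(m) = 0` (quartic) and `L_G(m) = 0` (quadratic) has exactly one
solution `m` in the open interval `(max 0 ((c1 − 1)/(c1·z)), 1/z)`. -/
theorem iid_fundamental_equations_unique_root
    (c1 c2 z sbar sund : ℝ) (hc1 : 0 < c1) (hc2 : 0 < c2) (hz : 0 < z)
    (hsbar : 0 ≤ sbar) (hsund : 0 < sund) :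
    (∃! m : ℝ, m ∈ Set.Ioo (max 0 ((c1 - 1) / (c1 * z))) (1 / z) ∧
      c1 * c2 * m * (c1 * z * m + 1 - c1) *
          (z * m - 1 + sbar * m * (c1 * z * m + 1 - c1)) +
        (sbar + 1) * m * (c1 * z * m + 1 - c1) + z * m - 1 = 0) ∧
    (∃! m : ℝ, m ∈ Set.Ioo (max 0 ((c1 - 1) / (c1 * z))) (1 / z) ∧
      sund * m * (c1 * z * m + 1 - c1) + z * m - 1 = 0) := by
  have hz' : z ≠ 0 := hz.ne'
  have hc1' : c1 ≠ 0 := hc1.ne'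
  set a := max 0 ((c1 - 1) / (c1 * z)) with ha_def
  have hab : a < 1 / z := by
    apply max_lt (by positivity)
    rw [div_lt_div_iff₀ (by positivity) hz]
    nlinarith
  have hpa : a * (c1 * z * a + 1 - c1) = 0 := by
    rcases le_or_gt (c1 - 1) 0 with h | h
    · have h0 : a = 0 := max_eq_left (div_nonpos_of_nonpos_of_nonneg h (by positivity))
      rw [h0]; ring
    · have h0 : a = (c1 - 1) / (c1 * z) :=
        max_eq_right (le_of_lt (div_pos h (by positivity)))
      rw [h0]; field_simp; ring
  have hza : z * a - 1 < 0 := by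
    have : a * z < (1/z) * z := mul_lt_mul_of_pos_right hab hz
    rw [one_div_mul_cancel hz'] at this
    linarith
  have hb1 : c1 * z * (1/z) + 1 - c1 = 1 := by field_simp; ring
  have hb2 : z * (1/z) - 1 = 0 := by field_simp; ring
  -- basic facts about points in the interval
  have hmem : ∀ m : ℝ, m ∈ Set.Ioo a (1/z) →
      0 < m ∧ 0 < c1 * z * m + 1 - c1 := by
    intro m hm
    have h1 : 0 < m := lt_of_le_of_lt (le_max_left _ _) hm.1
    have h2 : (c1 - 1) / (c1 * z) < m := lt_of_le_of_lt (le_max_right _ _) hm.1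
    rw [div_lt_iff₀ (by positivity)] at h2
    exact ⟨h1, by nlinarith⟩
  -- strict growth of p and q between two interval points
  have hpq : ∀ m1 m2 : ℝ, m1 ∈ Set.Ioo a (1/z) → m2 ∈ Set.Ioo a (1/z) → m1 < m2 →
      m1 * (c1 * z * m1 + 1 - c1) < m2 * (c1 * z * m2 + 1 - c1) := by
    intro m1 m2 hm1 hm2 h12
    obtain ⟨ha1, hb1'⟩ := hmem m1 hm1
    obtain ⟨ha2, hb2'⟩ := hmem m2 hm2
    nlinarith [mul_pos (sub_pos.mpr h12) hb1', mul_pos (mul_pos hc1 hz) (mul_pos ha2 (sub_pos.mpr h12))]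
  constructor
  · -- quartic L_F
    obtain ⟨m, hm, hfm⟩ := ivt_root a (1/z)
      (fun m => c1 * c2 * m * (c1 * z * m + 1 - c1) *
          (z * m - 1 + sbar * m * (c1 * z * m + 1 - c1)) +
        (sbar + 1) * m * (c1 * z * m + 1 - c1) + z * m - 1) hab
      (by fun_prop)
      (by
        show c1 * c2 * a * (c1 * z * a + 1 - c1) *
            (z * a - 1 + sbar * a * (c1 * z * a + 1 - c1)) +
          (sbar + 1) * a * (c1 * z * a + 1 - c1) + z * a - 1 < 0
        have key : c1 * c2 * a * (c1 * z * a + 1 - c1) *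
            (z * a - 1 + sbar * a * (c1 * z * a + 1 - c1)) +
          (sbar + 1) * a * (c1 * z * a + 1 - c1) + z * a - 1 = z * a - 1 := by
          linear_combination (c1 * c2 * (z * a - 1 + sbar * a * (c1 * z * a + 1 - c1))
            + sbar + 1) * hpa
        rw [key]; exact hza)
      (by
        show 0 < c1 * c2 * (1/z) * (c1 * z * (1/z) + 1 - c1) *
            (z * (1/z) - 1 + sbar * (1/z) * (c1 * z * (1/z) + 1 - c1)) +
          (sbar + 1) * (1/z) * (c1 * z * (1/z) + 1 - c1) + z * (1/z) - 1
        have key : c1 * c2 * (1/z) * (c1 * z * (1/z) + 1 - c1) *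
            (z * (1/z) - 1 + sbar * (1/z) * (c1 * z * (1/z) + 1 - c1)) +
          (sbar + 1) * (1/z) * (c1 * z * (1/z) + 1 - c1) + z * (1/z) - 1
            = c1 * c2 * sbar / z^2 + (sbar + 1) / z := by
          rw [hb1]
          field_simp
          ring
        rw [key]; positivity)
    have uniq : ∀ y1 y2 : ℝ, y1 ∈ Set.Ioo a (1/z) → y2 ∈ Set.Ioo a (1/z) →
        (c1 * c2 * y1 * (c1 * z * y1 + 1 - c1) *
          (z * y1 - 1 + sbar * y1 * (c1 * z * y1 + 1 - c1)) +
        (sbar + 1) * y1 * (c1 * z * y1 + 1 - c1) + z * y1 - 1 = 0) →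
        (c1 * c2 * y2 * (c1 * z * y2 + 1 - c1) *
          (z * y2 - 1 + sbar * y2 * (c1 * z * y2 + 1 - c1)) +
        (sbar + 1) * y2 * (c1 * z * y2 + 1 - c1) + z * y2 - 1 = 0) → ¬ y1 < y2 := by
      intro y1 y2 hy1 hy2 hf1 hf2 h12
      obtain ⟨hp1, hq1⟩ := hmem y1 hy1
      have h1 : (c1 * c2 * (y1 * (c1 * z * y1 + 1 - c1)) + 1) *
          (c1 * c2 * (z * y1 - 1 + sbar * (y1 * (c1 * z * y1 + 1 - c1))) + 1) = 1 := by
        linear_combination c1 * c2 * hf1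
      have h2 : (c1 * c2 * (y2 * (c1 * z * y2 + 1 - c1)) + 1) *
          (c1 * c2 * (z * y2 - 1 + sbar * (y2 * (c1 * z * y2 + 1 - c1))) + 1) = 1 := by
        linear_combination c1 * c2 * hf2
      have hpp := hpq y1 y2 hy1 hy2 h12
      have hu1 : (0:ℝ) < c1 * c2 * (y1 * (c1 * z * y1 + 1 - c1)) + 1 := by positivity
      have hu : c1 * c2 * (y1 * (c1 * z * y1 + 1 - c1)) + 1 <
          c1 * c2 * (y2 * (c1 * z * y2 + 1 - c1)) + 1 := by
        have := mul_lt_mul_of_pos_left hpp (mul_pos hc1 hc2); linarith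
      have hv : c1 * c2 * (z * y1 - 1 + sbar * (y1 * (c1 * z * y1 + 1 - c1))) + 1 <
          c1 * c2 * (z * y2 - 1 + sbar * (y2 * (c1 * z * y2 + 1 - c1))) + 1 := by
        have h3 : sbar * (y1 * (c1 * z * y1 + 1 - c1)) ≤
            sbar * (y2 * (c1 * z * y2 + 1 - c1)) :=
          mul_le_mul_of_nonneg_left hpp.le hsbar
        have h4 : c1 * c2 * (z * y1 - 1 + sbar * (y1 * (c1 * z * y1 + 1 - c1))) <
            c1 * c2 * (z * y2 - 1 + sbar * (y2 * (c1 * z * y2 + 1 - c1))) := by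
          apply mul_lt_mul_of_pos_left _ (mul_pos hc1 hc2)
          have h5 : z * y1 < z * y2 := mul_lt_mul_of_pos_left h12 hz
          linarith
        linarith
      exact prod_one_contra _ _ _ _ hu1 hu hv h1 h2
    refine ⟨m, ⟨hm, hfm⟩, ?_⟩
    intro y ⟨hy, hfy⟩
    rcases lt_trichotomy y m with h | h | h
    · exact absurd h (uniq y m hy hm hfy hfm)
    · exact h
    · exact absurd h (uniq m y hm hy hfm hfy)
  · -- quadratic L_G
    obtain ⟨m, hm, hfm⟩ := ivt_root a (1/z)
      (fun m => sund * m * (c1 * z * m + 1 - c1) + z * m - 1) hab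
      (by fun_prop)
      (by
        show sund * a * (c1 * z * a + 1 - c1) + z * a - 1 < 0
        have key : sund * a * (c1 * z * a + 1 - c1) + z * a - 1 = z * a - 1 := by
          linear_combination sund * hpa
        rw [key]; exact hza)
      (by
        show 0 < sund * (1/z) * (c1 * z * (1/z) + 1 - c1) + z * (1/z) - 1
        have key : sund * (1/z) * (c1 * z * (1/z) + 1 - c1) + z * (1/z) - 1 = sund / z := by
          rw [hb1]; field_simp; ring
        rw [key]; positivity)
    have uniq : ∀ y1 y2 : ℝ, y1 ∈ Set.Ioo a (1/z) → y2 ∈ Set.Ioo a (1/z) →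
        (sund * y1 * (c1 * z * y1 + 1 - c1) + z * y1 - 1 = 0) →
        (sund * y2 * (c1 * z * y2 + 1 - c1) + z * y2 - 1 = 0) → ¬ y1 < y2 := by
      intro y1 y2 hy1 hy2 hf1 hf2 h12
      have hpp := hpq y1 y2 hy1 hy2 h12
      nlinarith [mul_lt_mul_of_pos_left hpp hsund]
    refine ⟨m, ⟨hm, hfm⟩, ?_⟩
    intro y ⟨hy, hfy⟩
    rcases lt_trichotomy y m with h | h | h
    · exact absurd h (uniq y m hy hm hfy hfm)
    · exact h
    · exact absurd h (uniq m y hm hy hfm hfy)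
end
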